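/- arXiv:2506.14620 — 11 statements merged into one kernel-verified Lean document; each statement's English description precedes it below -/
import Mathlib

section
/- For any two neighboring data vectors x, x' that differ only at coordinate i, and for every set A of possible observed-data values, P(obs_x(S) ∈ A) ≤ P(obs_{x'}(S) ∈ A) + p_i. Consequently the observed-data mechanism satisfies (0, max_{j∈U} p_j)-differential privacy. -/
attribute [local instance] Classical.propDecidable

noncomputable section

/-- First-order inclusion probability `p_i = ∑_{s ∋ i} p(s)`. -/
def incl {U : Type*} [Fintype U] (p : Finset U → ℝ) (i : U) : ℝ :=
  ∑ s ∈ Finset.univ.filter (fun s : Finset U => i ∈ s), p s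

/-- Observed data `obs_x(s) = (s, (x_i)_{i ∈ s})`, the sample together with the
values of `x` labeled by the selected units. -/
def obs {U : Type*} (x : U → ℝ) (s : Finset U) : Finset U × (U → Option ℝ) :=
  (s, fun i => if i ∈ s then some (x i) else none)

/-- Probability of the event `E` under the sampling design `p`. -/
def Pr {U : Type*} [Fintype U] (p : Finset U → ℝ) (E : Finset U → Prop) : ℝ :=
  ∑ s ∈ Finset.univ.filter E, p s

/-- Two data vectors are neighbors if they differ in at most one coordinate. -/
def Neighbor {U : Type*} (x x' : U → ℝ) : Prop :=
  {j | x j ≠ x' j}.Subsingleton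

/-- For neighboring data vectors `x, x'` differing only at coordinate `i`, and any
set `A` of observed-data values, `P(obs_x(S) ∈ A) ≤ P(obs_{x'}(S) ∈ A) + p_i`.
Consequently the observed-data mechanism satisfies `(0, max_j p_j)`-differential
privacy. -/
theorem obs_mechanism_zero_delta_DP {U : Type*} [Fintype U] [Nonempty U]
    (p : Finset U → ℝ) (hp : ∀ s, 0 ≤ p s) (hsum : ∑ s : Finset U, p s = 1) :
    (∀ (i : U) (x x' : U → ℝ), (∀ j ≠ i, x j = x' j) →
      ∀ A : Set (Finset U × (U → Option ℝ)),
        Pr p (fun s => obs x s ∈ A) ≤ Pr p (fun s => obs x' s ∈ A) + incl p i) ∧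
    (∀ x x' : U → ℝ, Neighbor x x' →
      ∀ A : Set (Finset U × (U → Option ℝ)),
        Pr p (fun s => obs x s ∈ A) ≤ Pr p (fun s => obs x' s ∈ A) +
          Finset.univ.sup' Finset.univ_nonempty (incl p)) := by
  have key : ∀ (i : U) (x x' : U → ℝ), (∀ j ≠ i, x j = x' j) →
      ∀ A : Set (Finset U × (U → Option ℝ)),
        Pr p (fun s => obs x s ∈ A) ≤ Pr p (fun s => obs x' s ∈ A) + incl p i := by
    intro i x x' hxx A
    have hobs : ∀ s : Finset U, i ∉ s → obs x s = obs x' s := by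
      intro s his
      unfold obs
      refine Prod.ext rfl ?_
      funext j
      by_cases hj : j ∈ s
      · have : j ≠ i := fun h => his (h ▸ hj)
        simp [hj, hxx j this]
      · simp [hj]
    have hsub : Finset.univ.filter (fun s => obs x s ∈ A) ⊆
        Finset.univ.filter (fun s => obs x' s ∈ A) ∪
        Finset.univ.filter (fun s : Finset U => i ∈ s) := by
      intro s hs
      simp only [Finset.mem_filter, Finset.mem_univ, true_and] at hs
      by_cases his : i ∈ s
      · exact Finset.mem_union_right _ (by simp [his])
      · exact Finset.mem_union_left _ (by simp [← hobs s his, hs])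
    calc Pr p (fun s => obs x s ∈ A)
        ≤ ∑ s ∈ Finset.univ.filter (fun s => obs x' s ∈ A) ∪
            Finset.univ.filter (fun s : Finset U => i ∈ s), p s :=
          Finset.sum_le_sum_of_subset_of_nonneg hsub (fun s _ _ => hp s)
      _ ≤ Pr p (fun s => obs x' s ∈ A) + incl p i := by
          unfold Pr incl
          have h2 := Finset.sum_union_inter (s₁ := Finset.univ.filter (fun s => obs x' s ∈ A))
            (s₂ := Finset.univ.filter (fun s : Finset U => i ∈ s)) (f := p)
          have h3 : 0 ≤ ∑ s ∈ Finset.univ.filter (fun s => obs x' s ∈ A) ∩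
              Finset.univ.filter (fun s : Finset U => i ∈ s), p s :=
            Finset.sum_nonneg fun s _ => hp s
          linarith
  refine ⟨key, ?_⟩
  intro x x' hN A
  have hi : ∃ i : U, ∀ j ≠ i, x j = x' j := by
    by_cases h : ∀ j, x j = x' j
    · exact ⟨Classical.arbitrary U, fun j _ => h j⟩
    · push_neg at h
      obtain ⟨i, hi⟩ := h
      refine ⟨i, fun j hj => ?_⟩
      by_contra hc
      exact hj (hN hc hi)
  obtain ⟨i, hieq⟩ := hi
  have := key i x x' hieq A
  have hle : incl p i ≤ Finset.univ.sup' Finset.univ_nonempty (incl p) :=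
    Finset.le_sup' (incl p) (Finset.mem_univ i)
  linarith
end
end

section
/- For any function g defined on observed-data values, the post-processed mechanism x ↦ law of g(obs_x(S)) satisfies (0, max_{j∈U} p_j)-differential privacy: for all neighboring data vectors x, x' and every set A, P(g(obs_x(S)) ∈ A) ≤ P(g(obs_{x'}(S)) ∈ A) + max_{j∈U} p_j. -/
attribute [local instance] Classical.propDecidable

noncomputable section

lemma incl_nonneg {U : Type*} [Fintype U] (p : Finset U → ℝ) (hp : ∀ s, 0 ≤ p s) (i : U) :
    0 ≤ incl p i :=
  Finset.sum_nonneg fun s _ => hp s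

lemma incl_le_sup {U : Type*} [Fintype U] [Nonempty U] (p : Finset U → ℝ) (i : U) :
    incl p i ≤ Finset.univ.sup' Finset.univ_nonempty (incl p) :=
  Finset.le_sup' (incl p) (Finset.mem_univ i)

/-- Any post-processing `g` of the observed-data mechanism satisfies
`(0, max_j p_j)`-differential privacy. -/
theorem postprocessed_obs_mechanism_DP {U : Type*} [Fintype U] [Nonempty U]
    (p : Finset U → ℝ) (hp : ∀ s, 0 ≤ p s) (hsum : ∑ s : Finset U, p s = 1)
    {V : Type*} (g : Finset U × (U → Option ℝ) → V) :
    ∀ x x' : U → ℝ, Neighbor x x' →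
      ∀ A : Set V,
        Pr p (fun s => g (obs x s) ∈ A) ≤ Pr p (fun s => g (obs x' s) ∈ A) +
          Finset.univ.sup' Finset.univ_nonempty (incl p) := by
  intro x x' hN A
  by_cases hxx : ∀ i, x i = x' i
  · obtain rfl : x = x' := funext hxx
    have h0 : (0:ℝ) ≤ Finset.univ.sup' Finset.univ_nonempty (incl p) :=
      le_trans (incl_nonneg p hp (Classical.arbitrary U))
        (incl_le_sup p (Classical.arbitrary U))
    linarith
  · push_neg at hxx
    obtain ⟨j, hj⟩ := hxx
    have hother : ∀ i, i ≠ j → x i = x' i := by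
      intro i hij
      by_contra hi
      exact hij (hN hi hj)
    have key : ∀ s : Finset U, j ∉ s → obs x s = obs x' s := by
      intro s hs
      unfold obs
      refine Prod.ext rfl ?_
      funext i
      by_cases his : i ∈ s
      · have : i ≠ j := fun h => hs (h ▸ his)
        simp [his, hother i this]
      · simp [his]
    set E := fun s : Finset U => g (obs x s) ∈ A with hE
    set E' := fun s : Finset U => g (obs x' s) ∈ A with hE'
    have split : Pr p E =
        ∑ s ∈ (Finset.univ.filter E).filter (fun s => j ∉ s), p s +
        ∑ s ∈ (Finset.univ.filter E).filter (fun s => ¬ j ∉ s), p s :=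
      (Finset.sum_filter_add_sum_filter_not _ _ _).symm
    have h1 : ∑ s ∈ (Finset.univ.filter E).filter (fun s => j ∉ s), p s ≤ Pr p E' := by
      apply Finset.sum_le_sum_of_subset_of_nonneg
      · intro s hs
        simp only [Finset.mem_filter, Finset.mem_univ, true_and] at hs ⊢
        rcases hs with ⟨hsE, hjs⟩
        show E' s
        have : g (obs x' s) ∈ A := key s hjs ▸ hsE
        exact this
      · intro s _ _; exact hp s
    have h2 : ∑ s ∈ (Finset.univ.filter E).filter (fun s => ¬ j ∉ s), p s ≤ incl p j := by
      apply Finset.sum_le_sum_of_subset_of_nonneg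
      · intro s hs
        simp only [Finset.mem_filter, Finset.mem_univ, true_and, not_not] at hs ⊢
        exact hs.2
      · intro s _ _; exact hp s
    calc Pr p E = _ := split
      _ ≤ Pr p E' + incl p j := add_le_add h1 h2
      _ ≤ _ := by linarith [incl_le_sup p j]
end
end

section
/- If the data vectors x, x' differ exactly at coordinate i (that is, x_j = x'_j for all j ≠ i and x_i ≠ x'_i), then the smallest δ ≥ 0 such that P(obs_x(S) ∈ A) ≤ P(obs_{x'}(S) ∈ A) + δ holds for every set A of observed-data values is exactly p_i. In particular, taking i with p_i maximal, the observed-data mechanism is (0,δ)-differentially private for no δ smaller than max_{j∈U} p_j. -/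
attribute [local instance] Classical.propDecidable

noncomputable section

lemma obs_eq_of_not_mem {U : Type*} {x x' : U → ℝ} {i : U}
    (heq : ∀ j ≠ i, x j = x' j) {s : Finset U} (hi : i ∉ s) :
    obs x s = obs x' s := by
  unfold obs
  refine Prod.ext rfl ?_
  funext j
  by_cases hj : j ∈ s
  · simp only [hj, if_true]
    have : j ≠ i := fun h => hi (h ▸ hj)
    rw [heq j this]
  · simp [hj]

lemma pr_le_pr_add_incl {U : Type*} [Fintype U]
    (p : Finset U → ℝ) (hp : ∀ s, 0 ≤ p s) (i : U) (x x' : U → ℝ)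
    (heq : ∀ j ≠ i, x j = x' j) (A : Set (Finset U × (U → Option ℝ))) :
    Pr p (fun s => obs x s ∈ A) ≤ Pr p (fun s => obs x' s ∈ A) + incl p i := by
  classical
  unfold Pr incl
  have hsplit :
      Finset.univ.filter (fun s => obs x s ∈ A)
        = Finset.univ.filter (fun s => obs x s ∈ A ∧ i ∈ s)
            ∪ Finset.univ.filter (fun s => obs x s ∈ A ∧ i ∉ s) := by
    ext s
    by_cases h : i ∈ s <;> simp [h]
  rw [hsplit]
  have hdisj : Disjoint (Finset.univ.filter (fun s => obs x s ∈ A ∧ i ∈ s))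
      (Finset.univ.filter (fun s => obs x s ∈ A ∧ i ∉ s)) := by
    rw [Finset.disjoint_filter]
    tauto
  rw [Finset.sum_union hdisj, add_comm]
  apply add_le_add
  · refine Finset.sum_le_sum_of_subset_of_nonneg ?_ (fun s _ _ => hp s)
    intro s hs
    simp only [Finset.mem_filter, Finset.mem_univ, true_and] at hs ⊢
    rw [← obs_eq_of_not_mem heq hs.2]
    exact hs.1
  · refine Finset.sum_le_sum_of_subset_of_nonneg ?_ (fun s _ _ => hp s)
    intro s hs
    simp only [Finset.mem_filter, Finset.mem_univ, true_and] at hs ⊢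
    exact hs.2

/-- Tight event: sample contains `i` and reports value `v` at `i`. -/
def tightA {U : Type*} (i : U) (v : ℝ) : Set (Finset U × (U → Option ℝ)) :=
  {q | i ∈ q.1 ∧ q.2 i = some v}

lemma pr_tightA_self {U : Type*} [Fintype U] (p : Finset U → ℝ) (i : U) (x : U → ℝ) :
    Pr p (fun s => obs x s ∈ tightA i (x i)) = incl p i := by
  unfold Pr incl
  congr 1
  apply Finset.filter_congr
  intro s _
  by_cases h : i ∈ s <;> simp [tightA, obs, h]

lemma pr_tightA_other {U : Type*} [Fintype U] (p : Finset U → ℝ) (i : U)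
    (x' : U → ℝ) (v : ℝ) (hv : x' i ≠ v) :
    Pr p (fun s => obs x' s ∈ tightA i v) = 0 := by
  unfold Pr
  rw [Finset.filter_false_of_mem, Finset.sum_empty]
  intro s _
  simp only [tightA, obs, Set.mem_setOf_eq]
  rintro ⟨h1, h2⟩
  rw [if_pos h1] at h2
  exact hv (Option.some.inj h2)

/-- If `x, x'` differ exactly at coordinate `i`, the smallest admissible `δ ≥ 0`
for the observed-data mechanism at `ε = 0` is exactly `p_i`; in particular the
observed-data mechanism is `(0,δ)`-differentially private for no `δ` smaller
than `max_j p_j`. -/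
theorem obs_mechanism_delta_tight {U : Type*} [Fintype U] [Nonempty U]
    (p : Finset U → ℝ) (hp : ∀ s, 0 ≤ p s) (hsum : ∑ s : Finset U, p s = 1)
    (i : U) (x x' : U → ℝ) (hne : x i ≠ x' i) (heq : ∀ j ≠ i, x j = x' j) :
    sInf {δ : ℝ | 0 ≤ δ ∧ ∀ A : Set (Finset U × (U → Option ℝ)),
        Pr p (fun s => obs x s ∈ A) ≤ Pr p (fun s => obs x' s ∈ A) + δ} = incl p i ∧
    (∀ δ : ℝ,
      (∀ y y' : U → ℝ, Neighbor y y' → ∀ A : Set (Finset U × (U → Option ℝ)),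
        Pr p (fun s => obs y s ∈ A) ≤ Pr p (fun s => obs y' s ∈ A) + δ) →
      Finset.univ.sup' Finset.univ_nonempty (incl p) ≤ δ) := by
  constructor
  · apply le_antisymm
    · refine csInf_le ⟨incl p i, ?_⟩ ?_
      swap
      · exact ⟨incl_nonneg p hp i, fun A => pr_le_pr_add_incl p hp i x x' heq A⟩
      rintro δ ⟨-, hδ⟩
      have := hδ (tightA i (x i))
      rwa [pr_tightA_self, pr_tightA_other p i x' (x i) (fun h => hne h.symm),
        zero_add] at this
    · refine le_csInf ?_ ?_
      · exact ⟨incl p i, incl_nonneg p hp i,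
          fun A => pr_le_pr_add_incl p hp i x x' heq A⟩
      rintro δ ⟨-, hδ⟩
      have := hδ (tightA i (x i))
      rwa [pr_tightA_self, pr_tightA_other p i x' (x i) (fun h => hne h.symm),
        zero_add] at this
  · intro δ hδ
    apply Finset.sup'_le
    intro j _
    set y : U → ℝ := fun k => if k = j then 1 else 0 with hy
    have hnb : Neighbor y (fun _ => (0 : ℝ)) := by
      intro a ha b hb
      simp only [Set.mem_setOf_eq, hy] at ha hb
      by_cases haj : a = j
      · by_cases hbj : b = j
        · rw [haj, hbj]
        · simp [hbj] at hb
      · simp [haj] at ha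
    have := hδ y (fun _ => 0) hnb (tightA j 1)
    have h1 : Pr p (fun s => obs y s ∈ tightA j 1) = incl p j := by
      have : y j = 1 := by simp [hy]
      conv_lhs => rw [← this]
      exact pr_tightA_self p j y
    have h2 : Pr p (fun s => obs (fun _ => (0:ℝ)) s ∈ tightA j 1) = 0 :=
      pr_tightA_other p j _ 1 (by norm_num)
    rw [h1, h2, zero_add] at this
    exact this
end
end

section
/- For any two data vectors x, x' differing only at coordinate i, Σ_z (f_{Z₀|x}(z) − f_{Z₀|x'}(z))_+ ≤ p_i, where the sum ranges over the (finitely many) real numbers z in the support of f_{Z₀|x} and (a)_+ = max(a, 0). -/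
attribute [local instance] Classical.propDecidable

noncomputable section

/-- Horvitz–Thompson estimator `t̂(x,s) = ∑_{i ∈ s} x_i / p_i`. -/
def tHat {U : Type*} [Fintype U] (p : Finset U → ℝ) (x : U → ℝ) (s : Finset U) : ℝ :=
  ∑ i ∈ s, x i / incl p i

/-- Probability mass function of the noiseless Horvitz–Thompson mechanism:
`f_{Z₀|x}(z) = ∑_{s : t̂(x,s) = z} p(s)`. -/
def fZ0 {U : Type*} [Fintype U] (p : Finset U → ℝ) (x : U → ℝ) (z : ℝ) : ℝ :=
  ∑ s ∈ Finset.univ.filter (fun s : Finset U => tHat p x s = z), p s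

/-- The support of `f_{Z₀|x}`: the (finitely many) values taken by `t̂(x,·)` on
samples of positive probability. -/
def suppZ0 {U : Type*} [Fintype U] (p : Finset U → ℝ) (x : U → ℝ) : Finset ℝ :=
  (Finset.univ.filter (fun s : Finset U => 0 < p s)).image (tHat p x)

/-- For `x, x'` differing only at coordinate `i`,
`∑_z (f_{Z₀|x}(z) − f_{Z₀|x'}(z))₊ ≤ p_i`. -/
theorem HT_noiseless_delta_le {U : Type*} [Fintype U]
    (p : Finset U → ℝ) (hp : ∀ s, 0 ≤ p s) (hsum : ∑ s : Finset U, p s = 1)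
    (hpos : ∀ i : U, 0 < incl p i)
    (i : U) (x x' : U → ℝ) (heq : ∀ j ≠ i, x j = x' j) :
    ∑ z ∈ suppZ0 p x, max (fZ0 p x z - fZ0 p x' z) 0 ≤ incl p i := by
  -- tHat agrees on samples not containing i
  have htHat : ∀ s : Finset U, i ∉ s → tHat p x s = tHat p x' s := by
    intro s hi
    refine Finset.sum_congr rfl fun j hj => ?_
    rw [heq j (fun h => hi (h ▸ hj))]
  set g : ℝ → ℝ := fun z =>
    ∑ s ∈ Finset.univ.filter (fun s : Finset U => i ∈ s ∧ tHat p x s = z), p s with hg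
  have hstep : ∀ z : ℝ, max (fZ0 p x z - fZ0 p x' z) 0 ≤ g z := by
    intro z
    have hgnn : 0 ≤ g z := Finset.sum_nonneg fun s _ => hp s
    rcases le_or_gt (fZ0 p x z - fZ0 p x' z) 0 with h | h
    · simpa [max_eq_right h] using hgnn
    · rw [max_eq_left h.le]
      -- split fZ0 x z by membership of i
      have hx : fZ0 p x z =
          g z + ∑ s ∈ Finset.univ.filter
            (fun s : Finset U => i ∉ s ∧ tHat p x s = z), p s := by
        rw [fZ0, hg, ← Finset.sum_filter_add_sum_filter_not
          (Finset.univ.filter fun s : Finset U => tHat p x s = z) (fun s => i ∈ s)]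
        congr 1 <;> · congr 1; ext s; simp [Finset.mem_filter, and_comm]
      have hx' : ∑ s ∈ Finset.univ.filter
            (fun s : Finset U => i ∉ s ∧ tHat p x s = z), p s ≤ fZ0 p x' z := by
        rw [fZ0]
        apply Finset.sum_le_sum_of_subset_of_nonneg
        · intro s hs
          simp only [Finset.mem_filter] at hs ⊢
          exact ⟨hs.1, (htHat s hs.2.1) ▸ hs.2.2⟩
        · intro s _ _; exact hp s
      linarith
  calc ∑ z ∈ suppZ0 p x, max (fZ0 p x z - fZ0 p x' z) 0
      ≤ ∑ z ∈ suppZ0 p x, g z := Finset.sum_le_sum fun z _ => hstep z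
    _ = ∑ s ∈ (suppZ0 p x).biUnion
          (fun z => Finset.univ.filter fun s : Finset U => i ∈ s ∧ tHat p x s = z), p s := by
        rw [Finset.sum_biUnion]
        intro a _ b _ hab
        apply Finset.disjoint_left.mpr
        intro s hs hs'
        simp only [Finset.mem_filter] at hs hs'
        exact hab (hs.2.2 ▸ hs'.2.2)
    _ ≤ incl p i := by
        rw [incl]
        apply Finset.sum_le_sum_of_subset_of_nonneg
        · intro s hs
          simp only [Finset.mem_biUnion, Finset.mem_filter] at hs ⊢
          obtain ⟨z, _, _, hi, _⟩ := hs
          exact ⟨Finset.mem_univ s, hi⟩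
        · intro s _ _; exact hp s
end
end

section
/- Let x, x' be data vectors differing only at coordinate i. If the sets {t̂(x,s) : s ⊆ U, p(s) > 0, i ∈ s} and {t̂(x',s) : s ⊆ U, p(s) > 0, i ∈ s} are disjoint, then Σ_z (f_{Z₀|x}(z) − f_{Z₀|x'}(z))_+ = p_i, where the sum ranges over the support of f_{Z₀|x} and (a)_+ = max(a, 0). -/
attribute [local instance] Classical.propDecidable

noncomputable section

/-- If `x, x'` differ only at coordinate `i` and the sets
`{t̂(x,s) : p(s) > 0, i ∈ s}` and `{t̂(x',s) : p(s) > 0, i ∈ s}` are disjoint, then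
`∑_z (f_{Z₀|x}(z) − f_{Z₀|x'}(z))₊ = p_i`. -/
theorem HT_noiseless_delta_eq {U : Type*} [Fintype U]
    (p : Finset U → ℝ) (hp : ∀ s, 0 ≤ p s) (hsum : ∑ s : Finset U, p s = 1)
    (hpos : ∀ i : U, 0 < incl p i)
    (i : U) (x x' : U → ℝ) (heq : ∀ j ≠ i, x j = x' j)
    (hdisj : Disjoint
      ((Finset.univ.filter (fun s : Finset U => 0 < p s ∧ i ∈ s)).image (tHat p x))
      ((Finset.univ.filter (fun s : Finset U => 0 < p s ∧ i ∈ s)).image (tHat p x'))) :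
    ∑ z ∈ suppZ0 p x, max (fZ0 p x z - fZ0 p x' z) 0 = incl p i := by
  classical
  set B : (U → ℝ) → ℝ → ℝ := fun y z =>
    ∑ s ∈ Finset.univ.filter (fun s : Finset U => i ∈ s ∧ tHat p y s = z), p s with hB
  -- same tHat for sets not containing i
  have htHat : ∀ s : Finset U, i ∉ s → tHat p x s = tHat p x' s := by
    intro s hs
    apply Finset.sum_congr rfl
    intro j hj
    rw [heq j (fun h => hs (h ▸ hj))]
  -- split fZ0 into part avoiding i and part containing i
  have hsplit : ∀ (y : U → ℝ) (z : ℝ),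
      fZ0 p y z = (∑ s ∈ Finset.univ.filter
        (fun s : Finset U => i ∉ s ∧ tHat p y s = z), p s) + B y z := by
    intro y z
    rw [hB]
    simp only [fZ0]
    rw [← Finset.sum_filter_add_sum_filter_not
        (Finset.univ.filter (fun s : Finset U => tHat p y s = z)) (fun s => i ∉ s),
        Finset.filter_filter, Finset.filter_filter]
    congr 1
    · apply Finset.sum_congr _ (fun _ _ => rfl)
      apply Finset.filter_congr
      intro s _; tauto
    · apply Finset.sum_congr _ (fun _ _ => rfl)
      apply Finset.filter_congr
      intro s _; tauto
  -- the avoiding-i parts coincide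
  have hA : ∀ z : ℝ, (∑ s ∈ Finset.univ.filter
        (fun s : Finset U => i ∉ s ∧ tHat p x s = z), p s)
      = ∑ s ∈ Finset.univ.filter
        (fun s : Finset U => i ∉ s ∧ tHat p x' s = z), p s := by
    intro z
    apply Finset.sum_congr _ (fun _ _ => rfl)
    apply Finset.filter_congr
    intro s _
    constructor
    · rintro ⟨h1, h2⟩; exact ⟨h1, by rw [← htHat s h1]; exact h2⟩
    · rintro ⟨h1, h2⟩; exact ⟨h1, by rw [htHat s h1]; exact h2⟩
  have hBnn : ∀ (y : U → ℝ) (z : ℝ), 0 ≤ B y z := by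
    intro y z
    exact Finset.sum_nonneg (fun s _ => hp s)
  -- key pointwise identity
  have hkey : ∀ z : ℝ, max (fZ0 p x z - fZ0 p x' z) 0 = B x z := by
    intro z
    have hd : fZ0 p x z - fZ0 p x' z = B x z - B x' z := by
      rw [hsplit x z, hsplit x' z, hA z]; ring
    rcases eq_or_lt_of_le (hBnn x z) with h0 | hgt
    · rw [hd, ← h0]
      simp only [zero_sub, max_eq_right (neg_nonpos.mpr (hBnn x' z))]
    · -- B x z > 0, so z in image for x, hence not in image for x', hence B x' z = 0
      have hz : z ∈ (Finset.univ.filter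
          (fun s : Finset U => 0 < p s ∧ i ∈ s)).image (tHat p x) := by
        obtain ⟨s, hs, hps⟩ := Finset.exists_ne_zero_of_sum_ne_zero (ne_of_gt hgt)
        simp only [Finset.mem_filter, Finset.mem_univ, true_and] at hs
        exact Finset.mem_image.mpr ⟨s, Finset.mem_filter.mpr
          ⟨Finset.mem_univ s, lt_of_le_of_ne (hp s) (Ne.symm hps), hs.1⟩, hs.2⟩
      have hz' : z ∉ (Finset.univ.filter
          (fun s : Finset U => 0 < p s ∧ i ∈ s)).image (tHat p x') :=
        Finset.disjoint_left.mp hdisj hz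
      have hB'0 : B x' z = 0 := by
        apply Finset.sum_eq_zero
        intro s hs
        simp only [Finset.mem_filter, Finset.mem_univ, true_and] at hs
        by_contra hps
        exact hz' (Finset.mem_image.mpr ⟨s, Finset.mem_filter.mpr
          ⟨Finset.mem_univ s, lt_of_le_of_ne (hp s) (Ne.symm hps), hs.1⟩, hs.2⟩)
      rw [hd, hB'0, sub_zero, max_eq_left (hBnn x z)]
  rw [Finset.sum_congr rfl (fun z _ => hkey z)]
  -- now ∑ z ∈ suppZ0, B x z = incl p i
  have hff : ∀ z : ℝ, Finset.univ.filter (fun s : Finset U => i ∈ s ∧ tHat p x s = z)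
      = (Finset.univ.filter (fun s : Finset U => i ∈ s)).filter
        (fun s => tHat p x s = z) := by
    intro z; rw [Finset.filter_filter]
  simp only [hB, hff]
  rw [Finset.sum_fiberwise_eq_sum_filter _ _ (tHat p x) p]
  rw [incl]
  apply Finset.sum_subset (Finset.filter_subset _ _)
  intro s hs hns
  by_contra hps
  have hpos' : 0 < p s := lt_of_le_of_ne (hp s) (Ne.symm hps)
  apply hns
  rw [Finset.mem_filter]
  refine ⟨hs, Finset.mem_image.mpr ⟨s, ?_, rfl⟩⟩
  simp [hpos']
end
end

section
/- For b > 0 and any two data vectors x, x', the supremum over all z ∈ ℝ of the density ratio f_{Z_b|x}(z)/f_{Z_b|x'}(z) is attained on the finite set T̂ = {t̂(x'',s) : s ⊆ U, p(s) > 0, x'' ∈ {x, x'}}: sup_{z∈ℝ} f_{Z_b|x}(z)/f_{Z_b|x'}(z) = max_{z ∈ T̂} f_{Z_b|x}(z)/f_{Z_b|x'}(z). -/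
attribute [local instance] Classical.propDecidable

noncomputable section

/-- Density of the Laplace-perturbed Horvitz–Thompson mechanism `Z_b = t̂(x,S) + bW`. -/
def fZb {U : Type*} [Fintype U] (p : Finset U → ℝ) (b : ℝ) (x : U → ℝ) (z : ℝ) : ℝ :=
  ∑ s : Finset U, p s * ((2 * b)⁻¹ * Real.exp (-|z - tHat p x s| / b))

/-- The finite knot set `T̂ = {t̂(x'',s) : s ⊆ U, p(s) > 0, x'' ∈ {x, x'}}`. -/
def knots {U : Type*} [Fintype U] (p : Finset U → ℝ) (x x' : U → ℝ) : Finset ℝ :=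
  ((Finset.univ.filter (fun s : Finset U => 0 < p s)).image (tHat p x)) ∪
    ((Finset.univ.filter (fun s : Finset U => 0 < p s)).image (tHat p x'))

/-!
On an interval containing no knot, each kernel `exp (-|z - t| / b)` is `exp ((t - z) / b)` or
`exp ((z - t) / b)`, so after multiplication by `exp (z / b)` both densities become affine
functions `A + B u` of `u = exp (2 z / b)`. A quotient of affine functions with positive
denominator is bounded on a segment by its values at the endpoints, and on the two unbounded
pieces it is constant because one coefficient vanishes for both densities. So the ratio is
largest at a knot.
-/

open Real Finset

lemma exp_neg_abs_sub_div_mul_exp_of_le {b t z : ℝ} (hb : b ≠ 0) (h : t ≤ z) :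
    exp (-|z - t| / b) * exp (z / b) = exp (t / b) := by
  rw [abs_of_nonneg (sub_nonneg.2 h), ← exp_add]
  congr 1
  field_simp
  ring

lemma exp_neg_abs_sub_div_mul_exp_of_ge {b t z : ℝ} (hb : b ≠ 0) (h : z ≤ t) :
    exp (-|z - t| / b) * exp (z / b) = exp (-t / b) * exp (2 * z / b) := by
  rw [abs_of_nonpos (sub_nonpos.2 h), ← exp_add, ← exp_add]
  congr 1
  field_simp
  ring

lemma add_mul_nonneg_of_le_of_le {α β u₁ u u₂ : ℝ} (h₁ : u₁ ≤ u) (h₂ : u ≤ u₂)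
    (hu₁ : 0 ≤ α + β * u₁) (hu₂ : 0 ≤ α + β * u₂) : 0 ≤ α + β * u := by
  rcases h₁.eq_or_lt with rfl | hlt
  · exact hu₁
  · have : 0 ≤ (u₂ - u) * (α + β * u₁) + (u - u₁) * (α + β * u₂) :=
      add_nonneg (mul_nonneg (sub_nonneg.2 h₂) hu₁) (mul_nonneg (sub_nonneg.2 h₁) hu₂)
    nlinarith

lemma div_le_max_div_of_affine {A B A' B' u₁ u u₂ : ℝ} (h₁ : u₁ ≤ u) (h₂ : u ≤ u₂)
    (hD₁ : 0 < A' + B' * u₁) (hD₂ : 0 < A' + B' * u₂) :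
    (A + B * u) / (A' + B' * u) ≤
      max ((A + B * u₁) / (A' + B' * u₁)) ((A + B * u₂) / (A' + B' * u₂)) := by
  set M := max ((A + B * u₁) / (A' + B' * u₁)) ((A + B * u₂) / (A' + B' * u₂))
  have hM₁ : A + B * u₁ ≤ M * (A' + B' * u₁) := (div_le_iff₀ hD₁).1 (le_max_left _ _)
  have hM₂ : A + B * u₂ ≤ M * (A' + B' * u₂) := (div_le_iff₀ hD₂).1 (le_max_right _ _)
  have hD : 0 < A' + B' * u := by
    rcases h₁.eq_or_lt with rfl | hlt
    · exact hD₁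
    · nlinarith
  rw [div_le_iff₀ hD]
  have := add_mul_nonneg_of_le_of_le (α := M * A' - A) (β := M * B' - B) h₁ h₂
    (by linarith) (by linarith)
  linarith

lemma Finset.forall_le_or_forall_ge_or_exists_gap {α : Type*} [LinearOrder α] (K : Finset α)
    (z : α) : (∀ k ∈ K, k ≤ z) ∨ (∀ k ∈ K, z ≤ k) ∨
      ∃ k₁ ∈ K, ∃ k₂ ∈ K, k₁ ≤ z ∧ z ≤ k₂ ∧ ∀ k ∈ K, k ≤ k₁ ∨ k₂ ≤ k := by
  set below := K.filter (· ≤ z)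
  set above := K.filter (z ≤ ·)
  by_cases hbelow : below.Nonempty
  · by_cases habove : above.Nonempty
    · have hk₁ := mem_filter.1 (below.max'_mem hbelow)
      have hk₂ := mem_filter.1 (above.min'_mem habove)
      refine Or.inr (Or.inr ⟨_, hk₁.1, _, hk₂.1, hk₁.2, hk₂.2, fun k hk => ?_⟩)
      rcases le_total k z with h | h
      · exact Or.inl (le_max' below k (mem_filter.2 ⟨hk, h⟩))
      · exact Or.inr (min'_le above k (mem_filter.2 ⟨hk, h⟩))
    · exact Or.inl fun k hk =>
        (le_total k z).resolve_right fun h => habove ⟨k, mem_filter.2 ⟨hk, h⟩⟩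
  · exact Or.inr (Or.inl fun k hk =>
      (le_total z k).resolve_right fun h => hbelow ⟨k, mem_filter.2 ⟨hk, h⟩⟩)

section LaplaceMixture

variable {ι ι' : Type*} [Fintype ι] [Fintype ι']

def laplaceMixture (w t : ι → ℝ) (b z : ℝ) : ℝ :=
  ∑ i, w i * exp (-|z - t i| / b)

lemma laplaceMixture_pos {w : ι → ℝ} (t : ι → ℝ) {b : ℝ} (z : ℝ) (hw : ∀ i, 0 ≤ w i)
    {i₀ : ι} (hi₀ : 0 < w i₀) : 0 < laplaceMixture w t b z :=
  sum_pos' (fun i _ => mul_nonneg (hw i) (exp_pos _).le)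
    ⟨i₀, mem_univ _, mul_pos hi₀ (exp_pos _)⟩

lemma laplaceMixture_mul_exp {w t : ι → ℝ} {b z : ℝ} (hb : b ≠ 0) (S : Finset ι)
    (hS : ∀ i ∈ S, w i ≠ 0 → t i ≤ z) (hSc : ∀ i ∉ S, w i ≠ 0 → z ≤ t i) :
    laplaceMixture w t b z * exp (z / b) =
      ∑ i ∈ S, w i * exp (t i / b) + (∑ i ∈ Sᶜ, w i * exp (-t i / b)) * exp (2 * z / b) := by
  rw [laplaceMixture, ← sum_add_sum_compl S, add_mul, sum_mul, sum_mul, sum_mul]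
  congr 1 <;> refine sum_congr rfl fun i hi => ?_ <;> rcases eq_or_ne (w i) 0 with h0 | h0
  · simp [h0]
  · rw [mul_assoc, exp_neg_abs_sub_div_mul_exp_of_le hb (hS i hi h0)]
  · simp [h0]
  · rw [mul_assoc, exp_neg_abs_sub_div_mul_exp_of_ge hb (hSc i (mem_compl.1 hi) h0), mul_assoc]

lemma laplaceMixture_div_of_forall_le {w t : ι → ℝ} {w' t' : ι' → ℝ} {b z : ℝ} (hb : b ≠ 0)
    (h : ∀ i, w i ≠ 0 → t i ≤ z) (h' : ∀ i, w' i ≠ 0 → t' i ≤ z) :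
    laplaceMixture w t b z / laplaceMixture w' t' b z =
      (∑ i, w i * exp (t i / b)) / ∑ i, w' i * exp (t' i / b) := by
  rw [← mul_div_mul_right _ _ (exp_ne_zero (z / b)),
    laplaceMixture_mul_exp hb univ (fun i _ => h i) (fun i hi => absurd (mem_univ i) hi),
    laplaceMixture_mul_exp hb univ (fun i _ => h' i) (fun i hi => absurd (mem_univ i) hi)]
  simp

lemma laplaceMixture_div_of_forall_ge {w t : ι → ℝ} {w' t' : ι' → ℝ} {b z : ℝ} (hb : b ≠ 0)
    (h : ∀ i, w i ≠ 0 → z ≤ t i) (h' : ∀ i, w' i ≠ 0 → z ≤ t' i) :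
    laplaceMixture w t b z / laplaceMixture w' t' b z =
      (∑ i, w i * exp (-t i / b)) / ∑ i, w' i * exp (-t' i / b) := by
  rw [← mul_div_mul_right _ _ (exp_ne_zero (z / b)),
    laplaceMixture_mul_exp hb ∅ (fun i hi => absurd hi (notMem_empty i)) (fun i _ => h i),
    laplaceMixture_mul_exp hb ∅ (fun i hi => absurd hi (notMem_empty i)) (fun i _ => h' i)]
  simp only [sum_empty, compl_empty, zero_add]
  exact mul_div_mul_right _ _ (exp_ne_zero _)

lemma laplaceMixture_mul_exp_of_gap {w t : ι → ℝ} {b a c : ℝ} (hb : b ≠ 0)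
    (hgap : ∀ i, w i ≠ 0 → t i ≤ a ∨ c ≤ t i) :
    ∃ A B : ℝ, ∀ z ∈ Set.Icc a c,
      laplaceMixture w t b z * exp (z / b) = A + B * exp (2 * z / b) :=
  ⟨_, _, fun z hz => laplaceMixture_mul_exp hb (univ.filter fun i => t i ≤ a)
    (fun i hi _ => (mem_filter.1 hi).2.trans hz.1)
    (fun i hi hw => hz.2.trans ((hgap i hw).resolve_left fun h => hi (by simpa using h)))⟩

lemma laplaceMixture_div_le_max_of_gap {w t : ι → ℝ} {w' t' : ι' → ℝ} {b a c z : ℝ}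
    (hb : 0 < b) (haz : a ≤ z) (hzc : z ≤ c)
    (hgap : ∀ i, w i ≠ 0 → t i ≤ a ∨ c ≤ t i) (hgap' : ∀ i, w' i ≠ 0 → t' i ≤ a ∨ c ≤ t' i)
    (ha : 0 < laplaceMixture w' t' b a) (hc : 0 < laplaceMixture w' t' b c) :
    laplaceMixture w t b z / laplaceMixture w' t' b z ≤
      max (laplaceMixture w t b a / laplaceMixture w' t' b a)
        (laplaceMixture w t b c / laplaceMixture w' t' b c) := by
  obtain ⟨A, B, hAB⟩ := laplaceMixture_mul_exp_of_gap hb.ne' hgap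
  obtain ⟨A', B', hAB'⟩ := laplaceMixture_mul_exp_of_gap hb.ne' hgap'
  have hratio : ∀ y ∈ Set.Icc a c, laplaceMixture w t b y / laplaceMixture w' t' b y =
      (A + B * exp (2 * y / b)) / (A' + B' * exp (2 * y / b)) := fun y hy => by
    rw [← hAB y hy, ← hAB' y hy, mul_div_mul_right _ _ (exp_ne_zero _)]
  have hD : ∀ y ∈ Set.Icc a c, 0 < laplaceMixture w' t' b y → 0 < A' + B' * exp (2 * y / b) :=
    fun y hy hy' => hAB' y hy ▸ mul_pos hy' (exp_pos _)
  have haI : a ∈ Set.Icc a c := ⟨le_rfl, haz.trans hzc⟩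
  have hcI : c ∈ Set.Icc a c := ⟨haz.trans hzc, le_rfl⟩
  rw [hratio z ⟨haz, hzc⟩, hratio a haI, hratio c hcI]
  exact div_le_max_div_of_affine (by gcongr) (by gcongr) (hD a haI ha) (hD c hcI hc)

theorem exists_mem_forall_laplaceMixture_div_le {w t : ι → ℝ} {w' t' : ι' → ℝ} {b : ℝ}
    (hb : 0 < b) (K : Finset ℝ) (hK : K.Nonempty)
    (ht : ∀ i, w i ≠ 0 → t i ∈ K) (ht' : ∀ i, w' i ≠ 0 → t' i ∈ K)
    (hpos : ∀ z, 0 < laplaceMixture w' t' b z) :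
    ∃ k ∈ K, ∀ z, laplaceMixture w t b z / laplaceMixture w' t' b z ≤
      laplaceMixture w t b k / laplaceMixture w' t' b k := by
  set R := fun z => laplaceMixture w t b z / laplaceMixture w' t' b z
  obtain ⟨k₀, hk₀, hmax⟩ := K.exists_max_image R hK
  refine ⟨k₀, hk₀, fun z => ?_⟩
  suffices ∃ k ∈ K, R z ≤ R k from
    let ⟨k, hk, hzk⟩ := this; hzk.trans (hmax k hk)
  rcases K.forall_le_or_forall_ge_or_exists_gap z with
    hle | hge | ⟨k₁, hk₁, k₂, hk₂, h₁, h₂, hgap⟩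
  · refine ⟨K.max' hK, max'_mem K hK, le_of_eq ?_⟩
    simp only [R]
    rw [laplaceMixture_div_of_forall_le hb.ne' (fun i hi => hle _ (ht i hi))
        (fun i hi => hle _ (ht' i hi)),
      laplaceMixture_div_of_forall_le hb.ne' (fun i hi => le_max' K _ (ht i hi))
        (fun i hi => le_max' K _ (ht' i hi))]
  · refine ⟨K.min' hK, min'_mem K hK, le_of_eq ?_⟩
    simp only [R]
    rw [laplaceMixture_div_of_forall_ge hb.ne' (fun i hi => hge _ (ht i hi))
        (fun i hi => hge _ (ht' i hi)),
      laplaceMixture_div_of_forall_ge hb.ne' (fun i hi => min'_le K _ (ht i hi))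
        (fun i hi => min'_le K _ (ht' i hi))]
  · have hz := laplaceMixture_div_le_max_of_gap hb h₁ h₂ (fun i hi => hgap _ (ht i hi))
      (fun i hi => hgap _ (ht' i hi)) (hpos k₁) (hpos k₂)
    rcases le_max_iff.1 hz with h | h
    exacts [⟨k₁, hk₁, h⟩, ⟨k₂, hk₂, h⟩]

end LaplaceMixture

lemma fZb_eq_laplaceMixture {U : Type*} [Fintype U] (p : Finset U → ℝ) (b : ℝ) (x : U → ℝ)
    (z : ℝ) : fZb p b x z = (2 * b)⁻¹ * laplaceMixture p (tHat p x) b z := by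
  rw [fZb, laplaceMixture, mul_sum]
  exact sum_congr rfl fun s _ => by ring

lemma tHat_mem_knots_left {U : Type*} [Fintype U] {p : Finset U → ℝ} (x x' : U → ℝ)
    {s : Finset U} (hs : 0 < p s) : tHat p x s ∈ knots p x x' :=
  mem_union_left _ (mem_image_of_mem _ (mem_filter.2 ⟨mem_univ _, hs⟩))

lemma tHat_mem_knots_right {U : Type*} [Fintype U] {p : Finset U → ℝ} (x x' : U → ℝ)
    {s : Finset U} (hs : 0 < p s) : tHat p x' s ∈ knots p x x' :=
  mem_union_right _ (mem_image_of_mem _ (mem_filter.2 ⟨mem_univ _, hs⟩))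

theorem fZb_ratio_sup_attained_on_knots_general {U : Type*} [Fintype U]
    (p : Finset U → ℝ) (hp : ∀ s, 0 ≤ p s) (hsum : ∑ s : Finset U, p s = 1)
    (b : ℝ) (hb : 0 < b) (x x' : U → ℝ) :
    ∃ z₀ ∈ knots p x x', ∀ z : ℝ,
      fZb p b x z / fZb p b x' z ≤ fZb p b x z₀ / fZb p b x' z₀ := by
  obtain ⟨s₀, -, hs₀⟩ : ∃ s ∈ univ, 0 < p s :=
    exists_lt_of_sum_lt (by simp [hsum] : ∑ _s : Finset U, (0 : ℝ) < ∑ s, p s)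
  have hp_pos : ∀ s, p s ≠ 0 → 0 < p s := fun s hs => (hp s).lt_of_ne' hs
  have hc : (2 * b)⁻¹ ≠ 0 := by positivity
  simp only [fZb_eq_laplaceMixture, mul_div_mul_left _ _ hc]
  exact exists_mem_forall_laplaceMixture_div_le hb _ ⟨_, tHat_mem_knots_left x x' hs₀⟩
    (fun s hs => tHat_mem_knots_left x x' (hp_pos s hs))
    (fun s hs => tHat_mem_knots_right x x' (hp_pos s hs))
    (fun z => laplaceMixture_pos _ z hp hs₀)

/-- The supremum over `z ∈ ℝ` of the density ratio `f_{Z_b|x}/f_{Z_b|x'}` is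
attained at a point of the finite knot set `T̂`. -/
theorem fZb_ratio_sup_attained_on_knots {U : Type*} [Fintype U]
    (p : Finset U → ℝ) (hp : ∀ s, 0 ≤ p s) (hsum : ∑ s : Finset U, p s = 1)
    (hpos : ∀ i : U, 0 < incl p i) (b : ℝ) (hb : 0 < b) (x x' : U → ℝ) :
    ∃ z₀ ∈ knots p x x', ∀ z : ℝ,
      fZb p b x z / fZb p b x' z ≤ fZb p b x z₀ / fZb p b x' z₀ :=
  fZb_ratio_sup_attained_on_knots_general p hp hsum b hb x x'
end
end

section
/- For b > 0 and any two data vectors x, x', the function z ↦ f_{Z_b|x}(z)/f_{Z_b|x'}(z) is monotone on every closed interval whose interior contains no point of the finite knot set T̂ = {t̂(x'',s) : s ⊆ U, p(s) > 0, x'' ∈ {x, x'}}; equivalently, on any interval [a, c] with (a, c) ∩ T̂ = ∅ the ratio attains its maximum at a or at c. -/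
attribute [local instance] Classical.propDecidable

noncomputable section

lemma fZb_pos {U : Type*} [Fintype U] (p : Finset U → ℝ) (hp : ∀ s, 0 ≤ p s)
    (hsum : ∑ s : Finset U, p s = 1) (b : ℝ) (hb : 0 < b) (x : U → ℝ) (z : ℝ) :
    0 < fZb p b x z := by
  obtain ⟨s0, hs0⟩ : ∃ s : Finset U, 0 < p s := by
    by_contra h
    push_neg at h
    have : ∑ s : Finset U, p s = 0 :=
      Finset.sum_eq_zero fun s _ => le_antisymm (h s) (hp s)
    rw [this] at hsum
    norm_num at hsum
  unfold fZb
  refine Finset.sum_pos' (fun s _ => ?_) ⟨s0, Finset.mem_univ s0, ?_⟩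
  · exact mul_nonneg (hp s) (by positivity)
  · exact mul_pos hs0 (by positivity)

lemma fZb_rep {U : Type*} [Fintype U] (p : Finset U → ℝ) (hp : ∀ s, 0 ≤ p s)
    (b : ℝ) (x : U → ℝ) (a c : ℝ)
    (hsplit : ∀ s : Finset U, 0 < p s → tHat p x s ≤ a ∨ c ≤ tHat p x s)
    (z : ℝ) (hza : a ≤ z) (hzc : z ≤ c) :
    fZb p b x z = (2 * b)⁻¹ *
      ((∑ s : Finset U, if tHat p x s ≤ a then 0 else p s * Real.exp (-(tHat p x s) / b)) *
          Real.exp (z / b) +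
        (∑ s : Finset U, if tHat p x s ≤ a then p s * Real.exp (tHat p x s / b) else 0) *
          Real.exp (-z / b)) := by
  unfold fZb
  rw [Finset.sum_mul, Finset.sum_mul, ← Finset.sum_add_distrib, Finset.mul_sum]
  apply Finset.sum_congr rfl
  intro s _
  by_cases ht : tHat p x s ≤ a
  · rw [if_pos ht, if_pos ht, abs_of_nonneg (by linarith), mul_assoc, ← Real.exp_add,
      show tHat p x s / b + -z / b = -(z - tHat p x s) / b from by ring]
    ring
  · by_cases hps : 0 < p s
    · have h : c ≤ tHat p x s := (hsplit s hps).resolve_left ht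
      rw [if_neg ht, if_neg ht, abs_of_nonpos (by linarith), neg_neg, mul_assoc,
        ← Real.exp_add, show -(tHat p x s) / b + z / b = (z - tHat p x s) / b from by ring]
      ring
    · have h0 : p s = 0 := le_antisymm (not_lt.1 hps) (hp s)
      rw [h0, if_neg ht, if_neg ht]
      ring

/-- On every closed interval whose interior contains no knot, the density ratio
`z ↦ f_{Z_b|x}(z)/f_{Z_b|x'}(z)` is monotone; equivalently, it attains its maximum
over the interval at one of the endpoints. -/
theorem fZb_ratio_monotone_between_knots {U : Type*} [Fintype U]
    (p : Finset U → ℝ) (hp : ∀ s, 0 ≤ p s) (hsum : ∑ s : Finset U, p s = 1)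
    (hpos : ∀ i : U, 0 < incl p i) (b : ℝ) (hb : 0 < b) (x x' : U → ℝ)
    (a c : ℝ) (hac : a ≤ c) (hknots : ∀ z ∈ Set.Ioo a c, z ∉ knots p x x') :
    (MonotoneOn (fun z => fZb p b x z / fZb p b x' z) (Set.Icc a c) ∨
      AntitoneOn (fun z => fZb p b x z / fZb p b x' z) (Set.Icc a c)) ∧
    (∀ z ∈ Set.Icc a c, fZb p b x z / fZb p b x' z ≤
      max (fZb p b x a / fZb p b x' a) (fZb p b x c / fZb p b x' c)) := by
  have hsplit1 : ∀ s : Finset U, 0 < p s → tHat p x s ≤ a ∨ c ≤ tHat p x s := by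
    intro s hs
    by_contra h
    push_neg at h
    exact hknots _ ⟨h.1, h.2⟩ (Finset.mem_union_left _
      (Finset.mem_image.2 ⟨s, Finset.mem_filter.2 ⟨Finset.mem_univ s, hs⟩, rfl⟩))
  have hsplit2 : ∀ s : Finset U, 0 < p s → tHat p x' s ≤ a ∨ c ≤ tHat p x' s := by
    intro s hs
    by_contra h
    push_neg at h
    exact hknots _ ⟨h.1, h.2⟩ (Finset.mem_union_right _
      (Finset.mem_image.2 ⟨s, Finset.mem_filter.2 ⟨Finset.mem_univ s, hs⟩, rfl⟩))
  set A1 : ℝ := ∑ s : Finset U, if tHat p x s ≤ a then 0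
    else p s * Real.exp (-(tHat p x s) / b) with hA1def
  set B1 : ℝ := ∑ s : Finset U, if tHat p x s ≤ a then p s * Real.exp (tHat p x s / b)
    else 0 with hB1def
  set A2 : ℝ := ∑ s : Finset U, if tHat p x' s ≤ a then 0
    else p s * Real.exp (-(tHat p x' s) / b) with hA2def
  set B2 : ℝ := ∑ s : Finset U, if tHat p x' s ≤ a then p s * Real.exp (tHat p x' s / b)
    else 0 with hB2def
  have hA1n : 0 ≤ A1 := Finset.sum_nonneg fun s _ => by
    split_ifs with h
    exacts [le_rfl, mul_nonneg (hp s) (Real.exp_pos _).le]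
  have hB1n : 0 ≤ B1 := Finset.sum_nonneg fun s _ => by
    split_ifs with h
    exacts [mul_nonneg (hp s) (Real.exp_pos _).le, le_rfl]
  have hA2n : 0 ≤ A2 := Finset.sum_nonneg fun s _ => by
    split_ifs with h
    exacts [le_rfl, mul_nonneg (hp s) (Real.exp_pos _).le]
  have hB2n : 0 ≤ B2 := Finset.sum_nonneg fun s _ => by
    split_ifs with h
    exacts [mul_nonneg (hp s) (Real.exp_pos _).le, le_rfl]
  have hrep1 : ∀ z : ℝ, a ≤ z → z ≤ c →
      fZb p b x z = (2 * b)⁻¹ * (A1 * Real.exp (z / b) + B1 * Real.exp (-z / b)) :=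
    fun z h1 h2 => fZb_rep p hp b x a c hsplit1 z h1 h2
  have hrep2 : ∀ z : ℝ, a ≤ z → z ≤ c →
      fZb p b x' z = (2 * b)⁻¹ * (A2 * Real.exp (z / b) + B2 * Real.exp (-z / b)) :=
    fun z h1 h2 => fZb_rep p hp b x' a c hsplit2 z h1 h2
  have h2b : (0:ℝ) < (2 * b)⁻¹ := by positivity
  have hD : ∀ z : ℝ, a ≤ z → z ≤ c →
      0 < A2 * Real.exp (z / b) + B2 * Real.exp (-z / b) := by
    intro z h1 h2
    have h := fZb_pos p hp hsum b hb x' z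
    rw [hrep2 z h1 h2] at h
    rcases mul_pos_iff.mp h with ⟨_, h⟩ | ⟨h', _⟩
    · exact h
    · linarith
  have hratio : ∀ z : ℝ, a ≤ z → z ≤ c →
      fZb p b x z / fZb p b x' z =
        (A1 * Real.exp (z / b) + B1 * Real.exp (-z / b)) /
          (A2 * Real.exp (z / b) + B2 * Real.exp (-z / b)) := by
    intro z h1 h2
    rw [hrep1 z h1 h2, hrep2 z h1 h2, mul_div_mul_left _ _ (ne_of_gt h2b)]
  have hexp : ∀ z1 z2 : ℝ, z1 ≤ z2 →
      Real.exp (z1 / b) * Real.exp (-z2 / b) ≤ Real.exp (z2 / b) * Real.exp (-z1 / b) := by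
    intro z1 z2 h12
    have h1 : Real.exp (z1 / b) ≤ Real.exp (z2 / b) :=
      Real.exp_le_exp.2 (by apply div_le_div_of_nonneg_right h12 hb.le)
    have h2 : Real.exp (-z2 / b) ≤ Real.exp (-z1 / b) :=
      Real.exp_le_exp.2 (by apply div_le_div_of_nonneg_right (by linarith) hb.le)
    exact mul_le_mul h1 h2 (Real.exp_pos _).le (Real.exp_pos _).le
  have hmain : MonotoneOn (fun z => fZb p b x z / fZb p b x' z) (Set.Icc a c) ∨
      AntitoneOn (fun z => fZb p b x z / fZb p b x' z) (Set.Icc a c) := by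
    rcases le_or_gt 0 (A1 * B2 - A2 * B1) with hs | hs
    · left
      intro z1 hz1 z2 hz2 h12
      simp only
      rw [hratio z1 hz1.1 hz1.2, hratio z2 hz2.1 hz2.2,
        div_le_div_iff₀ (hD z1 hz1.1 hz1.2) (hD z2 hz2.1 hz2.2)]
      nlinarith [mul_nonneg hs (sub_nonneg.2 (hexp z1 z2 h12)),
        Real.exp_pos (z1 / b), Real.exp_pos (z2 / b),
        Real.exp_pos (-z1 / b), Real.exp_pos (-z2 / b)]
    · right
      intro z1 hz1 z2 hz2 h12
      simp only
      rw [hratio z1 hz1.1 hz1.2, hratio z2 hz2.1 hz2.2,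
        div_le_div_iff₀ (hD z2 hz2.1 hz2.2) (hD z1 hz1.1 hz1.2)]
      nlinarith [mul_nonneg (neg_nonneg.2 hs.le) (sub_nonneg.2 (hexp z1 z2 h12)),
        Real.exp_pos (z1 / b), Real.exp_pos (z2 / b),
        Real.exp_pos (-z1 / b), Real.exp_pos (-z2 / b)]
  refine ⟨hmain, ?_⟩
  intro z hz
  rcases hmain with hm | hm
  · exact le_trans (hm hz ⟨hac, le_refl c⟩ hz.2) (le_max_right _ _)
  · exact le_trans (hm ⟨le_refl a, hac⟩ hz hz.1) (le_max_left _ _)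
end
end

section
/- Under simple random sampling of size n from a population of size N, let x, x' ∈ {0,1}^U be neighboring binary data vectors with totals t = Σ_i x_i and t' = Σ_i x'_i, and let ε ∈ ℝ. Then the smallest δ ≥ 0 such that P(t̂(x,S) ∈ A) ≤ e^ε · P(t̂(x',S) ∈ A) + δ for every set A ⊆ ℝ equals Σ_{z=0}^{n} ( (C(t,z)·C(N−t, n−z) − e^ε·C(t',z)·C(N−t', n−z)) / C(N,n) )_+, where (a)_+ = max(a,0). -/
attribute [local instance] Classical.propDecidable

noncomputable section

open Finset
lemma count_mem {U : Type*} [Fintype U] (i : U) (n : ℕ) (hn : 1 ≤ n) :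
    (univ.filter fun s : Finset U => i ∈ s ∧ s.card = n).card
      = (Fintype.card U - 1).choose (n - 1) := by
  have hcard : (univ.erase i).card = Fintype.card U - 1 := by
    rw [card_erase_of_mem (mem_univ i), card_univ]
  rw [← hcard, ← Finset.card_powersetCard]
  apply Finset.card_bij' (fun s (_ : s ∈ univ.filter fun s : Finset U => i ∈ s ∧ s.card = n) => s.erase i)
    (fun a _ => insert i a)
  · intro s hs
    simp only [mem_filter, mem_univ, true_and] at hs
    rw [mem_powersetCard]
    exact ⟨erase_subset_erase i (subset_univ s), by rw [card_erase_of_mem hs.1, hs.2]⟩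
  · intro a ha
    rw [mem_powersetCard] at ha
    have hi : i ∉ a := fun h => (mem_erase.mp (ha.1 h)).1 rfl
    simp only [mem_filter, mem_univ, true_and]
    refine ⟨mem_insert_self i a, ?_⟩
    rw [card_insert_of_notMem hi, ha.2]; omega
  · intro s hs
    simp only [mem_filter] at hs
    exact insert_erase hs.2.1
  · intro a ha
    rw [mem_powersetCard] at ha
    exact erase_insert (fun h => (mem_erase.mp (ha.1 h)).1 rfl)

lemma count_hyper {U : Type*} [Fintype U] (T : Finset U) (n z : ℕ) (hz : z ≤ n) :
    (univ.filter fun s : Finset U => s.card = n ∧ (s ∩ T).card = z).card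
      = T.card.choose z * Tᶜ.card.choose (n - z) := by
  rw [← Finset.card_powersetCard, ← Finset.card_powersetCard, ← Finset.card_product]
  apply Finset.card_bij' (fun s (_ : s ∈ univ.filter fun s : Finset U => s.card = n ∧ (s ∩ T).card = z) => (s ∩ T, s \ T))
    (fun ab _ => ab.1 ∪ ab.2)
  · intro s hs
    simp only [mem_filter, mem_univ, true_and] at hs
    rw [Finset.mem_product, mem_powersetCard, mem_powersetCard]
    refine ⟨⟨inter_subset_right, hs.2⟩, ⟨?_, ?_⟩⟩
    · intro a ha; simp only [mem_sdiff] at ha; simpa using ha.2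
    · show (s \ T).card = n - z
      have := Finset.card_inter_add_card_sdiff s T
      omega
  · intro ab hab
    rw [Finset.mem_product, mem_powersetCard, mem_powersetCard] at hab
    obtain ⟨⟨h1, h2⟩, h3, h4⟩ := hab
    have hdisj : Disjoint ab.1 ab.2 := by
      apply Finset.disjoint_left.mpr
      intro a ha hb
      exact (by simpa using h3 hb : a ∉ T) (h1 ha)
    simp only [mem_filter, mem_univ, true_and]
    constructor
    · rw [card_union_of_disjoint hdisj, h2, h4]; omega
    · have : (ab.1 ∪ ab.2) ∩ T = ab.1 := by
        ext a
        simp only [mem_inter, mem_union]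
        constructor
        · rintro ⟨ha | ha, haT⟩
          · exact ha
          · exact absurd haT (by simpa using h3 ha)
        · intro ha; exact ⟨Or.inl ha, h1 ha⟩
      rw [this, h2]
  · intro s hs
    simp only
    rw [union_comm]
    exact Finset.sdiff_union_inter s T
  · intro ab hab
    rw [Finset.mem_product, mem_powersetCard, mem_powersetCard] at hab
    obtain ⟨⟨h1, h2⟩, h3, h4⟩ := hab
    have hT : (ab.1 ∪ ab.2) ∩ T = ab.1 := by
      ext a
      simp only [mem_inter, mem_union]
      constructor
      · rintro ⟨ha | ha, haT⟩
        · exact ha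
        · exact absurd haT (by simpa using h3 ha)
      · intro ha; exact ⟨Or.inl ha, h1 ha⟩
    have hS : (ab.1 ∪ ab.2) \ T = ab.2 := by
      ext a
      simp only [mem_sdiff, mem_union]
      constructor
      · rintro ⟨ha | ha, haT⟩
        · exact absurd (h1 ha) haT
        · exact ha
      · intro ha; exact ⟨Or.inr ha, by simpa using h3 ha⟩
    exact Prod.ext hT hS

lemma incl_eq {U : Type*} [Fintype U] (N n : ℕ) (hN : Fintype.card U = N) (hn1 : 1 ≤ n)
    (p : Finset U → ℝ) (hdef : ∀ s : Finset U, p s = if s.card = n then (1:ℝ)/(N.choose n) else 0)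
    (i : U) : incl p i = ((N-1).choose (n-1) : ℝ) / (N.choose n) := by
  unfold incl
  rw [Finset.sum_filter]
  have h : ∀ s : Finset U, (if i ∈ s then p s else 0)
      = if i ∈ s ∧ s.card = n then (1:ℝ)/(N.choose n) else 0 := by
    intro s; rw [hdef]; by_cases h1 : i ∈ s <;> by_cases h2 : s.card = n <;> simp [h1, h2]
  rw [Finset.sum_congr rfl fun s _ => h s, ← Finset.sum_filter, Finset.sum_const,
    count_mem i n hn1, hN, nsmul_eq_mul]
  ring

lemma Pr_formula {U : Type*} [Fintype U] (N n : ℕ) (hN : Fintype.card U = N)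
    (p : Finset U → ℝ) (hdef : ∀ s : Finset U, p s = if s.card = n then (1:ℝ)/(N.choose n) else 0)
    (c : ℝ) (hc : ∀ i, incl p i = c)
    (x : U → ℝ) (hx : ∀ i, x i = 0 ∨ x i = 1)
    (t : ℕ) (ht : (t : ℝ) = ∑ i, x i) (A : Set ℝ) :
    Pr p (fun s => tHat p x s ∈ A) =
      ∑ z ∈ Finset.range (n + 1),
        if ((z : ℝ) / c) ∈ A
        then ((t.choose z * (N - t).choose (n - z) : ℕ) : ℝ) / ((N.choose n : ℕ) : ℝ)
        else 0 := by
  classical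
  set T : Finset U := univ.filter (fun i => x i = 1) with hT
  have hxT : ∀ i, x i = if i ∈ T then (1:ℝ) else 0 := by
    intro i
    rcases hx i with h | h <;> simp [hT, h]
  have hsum : ∀ s : Finset U, ∑ i ∈ s, x i = ((s ∩ T).card : ℝ) := by
    intro s
    rw [Finset.sum_congr rfl fun i _ => hxT i, Finset.sum_ite_mem, Finset.sum_const,
      nsmul_eq_mul, mul_one]
  have hTt : T.card = t := by
    have : (t : ℝ) = (T.card : ℝ) := by
      rw [ht, hsum Finset.univ, Finset.univ_inter]
    exact_mod_cast this.symm
  have hcomplT : Tᶜ.card = N - t := by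
    rw [Finset.card_compl, hTt, hN]
  have htHat : ∀ s : Finset U, tHat p x s = ((s ∩ T).card : ℝ) / c := by
    intro s
    unfold tHat
    rw [Finset.sum_congr rfl fun i _ => by rw [hc i], ← Finset.sum_div, hsum]
  -- turn Pr into a sum over all sets of an if-expression
  have step1 : Pr p (fun s => tHat p x s ∈ A)
      = ∑ s : Finset U, (if tHat p x s ∈ A ∧ s.card = n then (1:ℝ)/(N.choose n) else 0) := by
    unfold Pr
    rw [Finset.sum_filter]
    refine Finset.sum_congr rfl fun s _ => ?_
    rw [hdef]
    by_cases h1 : tHat p x s ∈ A <;> by_cases h2 : s.card = n <;> simp [h1, h2]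
  rw [step1]
  set f : Finset U → ℝ := fun s => if tHat p x s ∈ A ∧ s.card = n then (1:ℝ)/(N.choose n) else 0
    with hf
  have step2 : ∑ s : Finset U, f s = ∑ s ∈ univ.filter (fun s : Finset U => s.card = n), f s := by
    rw [Finset.sum_filter_of_ne]
    intro s _ hne
    by_contra h
    exact hne (by simp [hf, h])
  rw [step2]
  have hmaps : ∀ s ∈ univ.filter (fun s : Finset U => s.card = n),
      (s ∩ T).card ∈ Finset.range (n + 1) := by
    intro s hs
    simp only [Finset.mem_filter] at hs
    rw [Finset.mem_range]
    have : (s ∩ T).card ≤ s.card := Finset.card_le_card Finset.inter_subset_left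
    omega
  rw [← Finset.sum_fiberwise_of_maps_to hmaps f]
  refine Finset.sum_congr rfl fun z hz => ?_
  rw [Finset.mem_range] at hz
  have hconst : ∀ s ∈ (univ.filter (fun s : Finset U => s.card = n)).filter
      (fun s => (s ∩ T).card = z), f s
        = if ((z : ℝ) / c) ∈ A then (1:ℝ)/(N.choose n) else 0 := by
    intro s hs
    simp only [Finset.mem_filter] at hs
    rw [hf]
    simp only [htHat s, hs.2, hs.1.2, and_true]
  rw [Finset.sum_congr rfl hconst, Finset.sum_const, Finset.filter_filter]
  rw [count_hyper T n z (by omega), hTt, hcomplT, nsmul_eq_mul]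
  push_cast
  by_cases hA : ((z : ℝ) / c) ∈ A <;> simp [hA] <;> ring

lemma term_le (X Y C e : ℝ) : X / C ≤ e * (Y / C) + max ((X - e * Y) / C) 0 := by
  have h := le_max_left ((X - e * Y) / C) (0:ℝ)
  have h2 : (X - e * Y) / C = X / C - e * (Y / C) := by ring
  linarith

lemma term_eq (X Y C e : ℝ) (cond : Prop) [Decidable cond]
    (h : cond ↔ 0 < (X - e * Y) / C) :
    (if cond then X / C else 0) - e * (if cond then Y / C else 0)
      = max ((X - e * Y) / C) 0 := by
  by_cases hc : cond
  · rw [if_pos hc, if_pos hc, max_eq_left (le_of_lt (h.mp hc))]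
    ring
  · rw [if_neg hc, if_neg hc, max_eq_right (by by_contra hlt; exact hc (h.mpr (by linarith))), mul_zero, sub_zero]

/-- Under simple random sampling on binary data, the optimal `δ` at privacy level
`ε` for a pair of neighboring data vectors with totals `t, t'` is
`∑_{z=0}^{n} ((C(t,z)C(N−t,n−z) − e^ε C(t',z)C(N−t',n−z))/C(N,n))₊`. -/
theorem SRS_binary_optimal_delta {U : Type*} [Fintype U]
    (N n : ℕ) (hN : Fintype.card U = N) (hn1 : 1 ≤ n) (hnN : n ≤ N)
    (p : Finset U → ℝ)
    (hdef : ∀ s : Finset U, p s = if s.card = n then (1 : ℝ) / (N.choose n) else 0)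
    (x x' : U → ℝ) (hx : ∀ i, x i = 0 ∨ x i = 1) (hx' : ∀ i, x' i = 0 ∨ x' i = 1)
    (hnb : Neighbor x x')
    (t t' : ℕ) (ht : (t : ℝ) = ∑ i, x i) (ht' : (t' : ℝ) = ∑ i, x' i)
    (ε : ℝ) :
    IsLeast {δ : ℝ | 0 ≤ δ ∧ ∀ A : Set ℝ,
        Pr p (fun s => tHat p x s ∈ A) ≤
          Real.exp ε * Pr p (fun s => tHat p x' s ∈ A) + δ}
      (∑ z ∈ Finset.range (n + 1),
        max ((((t.choose z * (N - t).choose (n - z) : ℕ) : ℝ) -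
          Real.exp ε * ((t'.choose z * (N - t').choose (n - z) : ℕ) : ℝ)) /
            ((N.choose n : ℕ) : ℝ)) 0) := by
  have hCpos : (0:ℝ) < ((N.choose n : ℕ) : ℝ) := by exact_mod_cast Nat.choose_pos hnN
  set c : ℝ := ((N-1).choose (n-1) : ℝ) / (N.choose n) with hcdef
  have hcpos : 0 < c := by
    apply div_pos _ hCpos
    exact_mod_cast Nat.choose_pos (Nat.sub_le_sub_right hnN 1)
  have hc : ∀ i, incl p i = c := fun i => incl_eq N n hN hn1 p hdef i
  have hPx := fun A => Pr_formula N n hN p hdef c hc x hx t ht A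
  have hPx' := fun A => Pr_formula N n hN p hdef c hc x' hx' t' ht' A
  constructor
  · refine ⟨Finset.sum_nonneg fun z _ => le_max_right _ _, fun A => ?_⟩
    rw [hPx A, hPx' A, Finset.mul_sum, ← Finset.sum_add_distrib]
    refine Finset.sum_le_sum fun z _ => ?_
    by_cases hA : ((z:ℝ)/c) ∈ A
    · rw [if_pos hA, if_pos hA]
      exact term_le _ _ _ _
    · rw [if_neg hA, if_neg hA, mul_zero, zero_add]
      exact le_max_right _ _
  · rintro δ ⟨hδ0, hδ⟩
    set D : ℕ → ℝ := fun z =>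
      ((((t.choose z * (N - t).choose (n - z) : ℕ) : ℝ) -
          Real.exp ε * ((t'.choose z * (N - t').choose (n - z) : ℕ) : ℝ)) /
            ((N.choose n : ℕ) : ℝ)) with hDdef
    show (∑ z ∈ Finset.range (n + 1), max (D z) 0) ≤ δ
    set A0 : Set ℝ := {r | ∃ w : ℕ, w ≤ n ∧ 0 < D w ∧ r = (w:ℝ)/c} with hA0
    have key := hδ A0
    rw [hPx A0, hPx' A0] at key
    have hiff : ∀ z, z ∈ Finset.range (n+1) → (((z:ℝ)/c) ∈ A0 ↔ 0 < D z) := by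
      intro z hz
      rw [Finset.mem_range] at hz
      constructor
      · rintro ⟨w, hw, hpos, heq⟩
        have hz' : (z:ℝ) = (w:ℝ) := by
          rw [div_eq_div_iff hcpos.ne' hcpos.ne'] at heq
          exact mul_right_cancel₀ hcpos.ne' heq
        have : z = w := by exact_mod_cast hz'
        rwa [this]
      · intro hpos
        exact ⟨z, by omega, hpos, rfl⟩
    have hsum : (∑ z ∈ Finset.range (n + 1), max (D z) 0)
        = (∑ z ∈ Finset.range (n+1),
            @ite ℝ (((z:ℝ)/c) ∈ A0) (Classical.propDecidable _)
            (((t.choose z * (N - t).choose (n - z) : ℕ) : ℝ) / ((N.choose n : ℕ) : ℝ))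
            0)
          - Real.exp ε * ∑ z ∈ Finset.range (n+1),
            @ite ℝ (((z:ℝ)/c) ∈ A0) (Classical.propDecidable _)
            (((t'.choose z * (N - t').choose (n - z) : ℕ) : ℝ) / ((N.choose n : ℕ) : ℝ))
            0 := by
      rw [Finset.mul_sum, ← Finset.sum_sub_distrib]
      refine Finset.sum_congr rfl fun z hz => ?_
      have h := hiff z hz
      simp only [hDdef] at h ⊢
      exact (@term_eq _ _ _ _ _ (Classical.propDecidable _) h).symm
    linarith [key, hsum]
end
end

section
/- Let U have size N, let 1 ≤ n ≤ N, let 0 ≤ m_t < M_t ≤ N, and let X = {x ∈ {0,1}^U : m_t ≤ Σ_i x_i ≤ M_t}. If min{m_t, N − M_t} < n, then for every real ε the Horvitz–Thompson mechanism under simple random sampling of size n fails (ε, 0)-differential privacy on X: there exist neighbors x, x' ∈ X and a real z such that P(t̂(x,S) = z) > 0 while P(t̂(x',S) = z) = 0. -/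
attribute [local instance] Classical.propDecidable

noncomputable section

/-!
Under simple random sampling every inclusion probability is `n / N`, so the Horvitz–Thompson
estimate of an indicator vector `1_A` on a sample `s` is `(N / n) · #(s ∩ A)`: its support is
read off from the possible sizes of `s ∩ A`. If `m_t < n`, a set `A` of size `m_t + 1` fits
inside a sample, while `A` minus one point never meets a sample in `m_t + 1` points. If
`N - M_t < n`, every sample meets a set `A` of size `M_t` in at least `n - (N - M_t)` points,
while `A` minus one point is met in one point fewer by a sample containing its complement.
-/

open Finset

theorem Neighbor.symm {U : Type*} {x x' : U → ℝ} (h : Neighbor x x') : Neighbor x' x :=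
  fun _ hi _ hj => h (Ne.symm hi) (Ne.symm hj)

theorem neighbor_indicator_erase {U : Type*} (A : Finset U) (a : U) :
    Neighbor ((A.erase a : Set U).indicator 1) ((A : Set U).indicator 1) := by
  refine (Set.subsingleton_singleton (a := a)).anti fun j hj => ?_
  by_contra hja
  simp_all [Set.indicator_apply]

variable {U : Type*} [Fintype U]

theorem card_filter_mem_card_eq_succ (i : U) (k : ℕ) :
    #{s : Finset U | i ∈ s ∧ #s = k + 1} = (Fintype.card U - 1).choose k := by
  rw [← card_univ, ← card_erase_of_mem (mem_univ i), ← card_powersetCard]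
  refine card_bij' (fun s _ => s.erase i) (fun t _ => insert i t) ?_ ?_ ?_ ?_
  · intro s hs
    simp only [mem_filter, mem_univ, true_and] at hs
    simp [mem_powersetCard, card_erase_of_mem hs.1, hs.2, erase_subset_erase]
  · intro t ht
    rw [mem_powersetCard] at ht
    have hit : i ∉ t := fun h => (mem_erase.1 (ht.1 h)).1 rfl
    simp [card_insert_of_notMem hit, ht.2]
  · intro s hs
    exact insert_erase (mem_filter.1 hs).2.1
  · intro t ht
    exact erase_insert fun h => (mem_erase.1 ((mem_powersetCard.1 ht).1 h)).1 rfl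

theorem exists_card_eq_card_inter_eq (A : Finset U) {n k : ℕ} (hkA : k ≤ #A) (hkn : k ≤ n)
    (hnk : n - k ≤ #Aᶜ) : ∃ s : Finset U, #s = n ∧ #(s ∩ A) = k := by
  obtain ⟨B, hBA, hB⟩ := exists_subset_card_eq hkA
  obtain ⟨C, hCA, hC⟩ := exists_subset_card_eq hnk
  have hCA' : Disjoint C A := disjoint_of_subset_left hCA disjoint_compl_left
  refine ⟨B ∪ C, ?_, ?_⟩
  · rw [card_union_of_disjoint (disjoint_of_subset_left hBA hCA'.symm), hB, hC]
    omega
  · rw [union_inter_distrib_right, inter_eq_left.2 hBA, disjoint_iff_inter_eq_empty.1 hCA',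
      union_empty, hB]

theorem card_le_card_inter_add_card_compl (s A : Finset U) : #s ≤ #(s ∩ A) + #Aᶜ := by
  rw [← card_inter_add_card_sdiff s A]
  gcongr
  exact fun i hi => mem_compl.2 (mem_sdiff.1 hi).2

theorem exists_pointed_finset_card_eq {m : ℕ} (hm : 0 < m) (hmU : m ≤ Fintype.card U) :
    ∃ A : Finset U, ∃ a ∈ A, #A = m := by
  obtain ⟨A, -, hA⟩ :=
    exists_subset_card_eq (s := (univ : Finset U)) (n := m) (by rwa [card_univ])
  obtain ⟨a, ha⟩ : A.Nonempty := card_pos.1 (hA ▸ hm)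
  exact ⟨A, a, ha, hA⟩

def simpleRandomSampling (n : ℕ) (s : Finset U) : ℝ :=
  if #s = n then 1 / (Fintype.card U).choose n else 0

def binaryBoundedSum (mt Mt : ℕ) : Set (U → ℝ) :=
  {x | (∀ i, x i = 0 ∨ x i = 1) ∧ (mt : ℝ) ≤ ∑ i, x i ∧ ∑ i, x i ≤ (Mt : ℝ)}

/-- This rules out `(ε, 0)`-differential privacy on `X` for every `ε`. -/
def PureDPViolation (p : Finset U → ℝ) (X : Set (U → ℝ)) : Prop :=
  ∃ x ∈ X, ∃ x' ∈ X, Neighbor x x' ∧ ∃ z : ℝ,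
    0 < Pr p (fun s => tHat p x s = z) ∧ Pr p (fun s => tHat p x' s = z) = 0

variable {n : ℕ}

theorem indicator_mem_binaryBoundedSum {mt Mt : ℕ} {A : Finset U} (hmt : mt ≤ #A)
    (hMt : #A ≤ Mt) :
    (A : Set U).indicator 1 ∈ binaryBoundedSum mt Mt := by
  have hsum : ∑ i, (A : Set U).indicator (1 : U → ℝ) i = #A := by
    rw [sum_indicator_eq_sum_filter]
    simp
  refine ⟨fun i => Set.indicator_eq_zero_or_self _ _ i, ?_, ?_⟩ <;> rw [hsum] <;>
    exact_mod_cast ‹_›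

theorem incl_simpleRandomSampling (hn : 0 < n) (hnN : n ≤ Fintype.card U) (i : U) :
    incl (simpleRandomSampling n) i = n / Fintype.card U := by
  obtain ⟨k, rfl⟩ := Nat.exists_eq_add_one_of_ne_zero hn.ne'
  obtain ⟨M, hM⟩ := Nat.exists_eq_add_one_of_ne_zero (by omega : Fintype.card U ≠ 0)
  have hcount :
      incl (simpleRandomSampling (k + 1)) i = (M.choose k : ℝ) / (M + 1).choose (k + 1) := by
    simp only [incl, simpleRandomSampling]
    rw [sum_ite, sum_const_zero, add_zero, sum_const, filter_filter,
      card_filter_mem_card_eq_succ, hM, Nat.add_sub_cancel, nsmul_eq_mul]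
    ring
  have hchoose : ((M + 1 : ℕ) : ℝ) * M.choose k = (M + 1).choose (k + 1) * (k + 1 : ℕ) := by
    exact_mod_cast Nat.add_one_mul_choose_eq M k
  have hpos : (0 : ℝ) < (M + 1).choose (k + 1) := by
    exact_mod_cast Nat.choose_pos (by omega)
  rw [hcount, hM]
  field_simp
  push_cast at hchoose ⊢
  linarith

theorem tHat_indicator_of_incl_eq {p : Finset U → ℝ} {π : ℝ} (hπ : ∀ i, incl p i = π)
    (A s : Finset U) : tHat p ((A : Set U).indicator 1) s = #(s ∩ A) / π := by
  simp only [tHat, hπ, ← sum_div]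
  rw [sum_indicator_eq_sum_filter]
  simp [filter_mem_eq_inter]

theorem simpleRandomSampling_nonneg (s : Finset U) : 0 ≤ simpleRandomSampling n s := by
  unfold simpleRandomSampling
  split_ifs <;> positivity

theorem simpleRandomSampling_pos_iff (hnN : n ≤ Fintype.card U) {s : Finset U} :
    0 < simpleRandomSampling n s ↔ #s = n := by
  have hpos : (0 : ℝ) < (Fintype.card U).choose n := by exact_mod_cast Nat.choose_pos hnN
  unfold simpleRandomSampling
  split_ifs with h <;> simp [h, hpos]

theorem Pr_simpleRandomSampling_pos_iff (hnN : n ≤ Fintype.card U)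
    {E : Finset U → Prop} :
    0 < Pr (simpleRandomSampling n) E ↔ ∃ s, #s = n ∧ E s := by
  rw [Pr, sum_pos_iff_of_nonneg fun s _ => simpleRandomSampling_nonneg s]
  simp [simpleRandomSampling_pos_iff hnN, and_comm]

theorem Pr_simpleRandomSampling_eq_zero_iff (hnN : n ≤ Fintype.card U)
    {E : Finset U → Prop} :
    Pr (simpleRandomSampling n) E = 0 ↔ ∀ s, #s = n → ¬E s := by
  have hnonneg : 0 ≤ Pr (simpleRandomSampling n) E :=
    sum_nonneg fun s _ => simpleRandomSampling_nonneg s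
  rw [← not_iff_not, ← Ne, ← hnonneg.lt_iff_ne', Pr_simpleRandomSampling_pos_iff hnN]
  simp

theorem pureDPViolation_of_indicator (hn : 0 < n) (hnN : n ≤ Fintype.card U)
    {X : Set (U → ℝ)} {A B : Finset U} (hA : (A : Set U).indicator 1 ∈ X)
    (hB : (B : Set U).indicator 1 ∈ X)
    (hAB : Neighbor ((A : Set U).indicator 1) ((B : Set U).indicator 1))
    (k : ℕ) (hit : ∃ s : Finset U, #s = n ∧ #(s ∩ A) = k)
    (miss : ∀ s : Finset U, #s = n → #(s ∩ B) ≠ k) :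
    PureDPViolation (simpleRandomSampling n) X := by
  have htHat := tHat_indicator_of_incl_eq (incl_simpleRandomSampling hn hnN)
  have hπ : (n / Fintype.card U : ℝ) ≠ 0 := by
    have : 0 < Fintype.card U := hn.trans_le hnN
    positivity
  refine ⟨_, hA, _, hB, hAB, k / (n / Fintype.card U : ℝ), ?_, ?_⟩
  · obtain ⟨s, hs, hk⟩ := hit
    exact (Pr_simpleRandomSampling_pos_iff hnN).2 ⟨s, hs, by rw [htHat, hk]⟩
  · refine (Pr_simpleRandomSampling_eq_zero_iff hnN).2 fun s hs => ?_
    rw [htHat, div_left_inj' hπ, Nat.cast_inj]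
    exact miss s hs

theorem pureDPViolation_of_lt_lower {mt Mt : ℕ} (hnN : n ≤ Fintype.card U) (hmn : mt < n)
    (hmM : mt < Mt) :
    PureDPViolation (simpleRandomSampling n) (binaryBoundedSum (U := U) mt Mt) := by
  obtain ⟨A, a, ha, hA⟩ :=
    exists_pointed_finset_card_eq (U := U) (m := mt + 1) (by omega) (by omega)
  have hA' : #(A.erase a) = mt := by rw [card_erase_of_mem ha, hA]; rfl
  have hit : ∃ s : Finset U, #s = n ∧ #(s ∩ A) = mt + 1 :=
    exists_card_eq_card_inter_eq A hA.ge hmn (by rw [card_compl, hA]; omega)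
  have miss (s : Finset U) : #(s ∩ A.erase a) ≠ mt + 1 :=
    ((card_le_card inter_subset_right).trans hA'.le).trans_lt (lt_add_one mt) |>.ne
  exact pureDPViolation_of_indicator (by omega) hnN
    (indicator_mem_binaryBoundedSum (by omega) (by omega))
    (indicator_mem_binaryBoundedSum hA'.ge (by omega))
    (neighbor_indicator_erase A a).symm _ hit fun s _ => miss s

theorem pureDPViolation_of_lt_upper {mt Mt : ℕ} (hnN : n ≤ Fintype.card U)
    (hMn : Fintype.card U - Mt < n) (hmM : mt < Mt) (hMN : Mt ≤ Fintype.card U) :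
    PureDPViolation (simpleRandomSampling n) (binaryBoundedSum (U := U) mt Mt) := by
  obtain ⟨A, a, ha, hA⟩ := exists_pointed_finset_card_eq (U := U) (m := Mt) (by omega) hMN
  have hA' : #(A.erase a) = Mt - 1 := by rw [card_erase_of_mem ha, hA]
  set k := n - (Fintype.card U - Mt) - 1
  have hit : ∃ s : Finset U, #s = n ∧ #(s ∩ A.erase a) = k :=
    exists_card_eq_card_inter_eq _ (by omega) (by omega) (by rw [card_compl, hA']; omega)
  have miss (s : Finset U) (hs : #s = n) : #(s ∩ A) ≠ k := by
    have := card_le_card_inter_add_card_compl s A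
    rw [card_compl, hA, hs] at this
    omega
  exact pureDPViolation_of_indicator (by omega) hnN
    (indicator_mem_binaryBoundedSum (by omega) (by omega))
    (indicator_mem_binaryBoundedSum (by omega) hA.le)
    (neighbor_indicator_erase A a) k hit miss

end

theorem SRS_binary_pure_DP_fails_general {U : Type*} [Fintype U]
    (N n mt Mt : ℕ) (hN : Fintype.card U = N) (hnN : n ≤ N)
    (hmM : mt < Mt) (hMN : Mt ≤ N)
    (p : Finset U → ℝ)
    (hdef : ∀ s : Finset U, p s = if s.card = n then (1 : ℝ) / (N.choose n) else 0)
    (X : Set (U → ℝ))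
    (hX : X = {x | (∀ i, x i = 0 ∨ x i = 1) ∧
      (mt : ℝ) ≤ ∑ i, x i ∧ ∑ i, x i ≤ (Mt : ℝ)})
    (hmin : min mt (N - Mt) < n) :
    ∀ ε : ℝ, ∃ x ∈ X, ∃ x' ∈ X, Neighbor x x' ∧ ∃ z : ℝ,
      0 < Pr p (fun s => tHat p x s = z) ∧ Pr p (fun s => tHat p x' s = z) = 0 := by
  intro _
  subst hN hX
  obtain rfl : p = simpleRandomSampling n := funext hdef
  rcases min_lt_iff.1 hmin with hlow | hhigh
  · exact pureDPViolation_of_lt_lower hnN hlow hmM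
  · exact pureDPViolation_of_lt_upper hnN hhigh hmM hMN

/-- If `min{m_t, N − M_t} < n` then under simple random sampling of size `n` the
Horvitz–Thompson mechanism on binary data with total constrained to `[m_t, M_t]`
fails `(ε,0)`-differential privacy for every `ε`: some neighboring pair in `X`
produces an output value that has positive probability under one data vector and
zero probability under the other. -/
theorem SRS_binary_pure_DP_fails {U : Type*} [Fintype U]
    (N n mt Mt : ℕ) (hN : Fintype.card U = N) (hn1 : 1 ≤ n) (hnN : n ≤ N)
    (hmM : mt < Mt) (hMN : Mt ≤ N)
    (p : Finset U → ℝ)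
    (hdef : ∀ s : Finset U, p s = if s.card = n then (1 : ℝ) / (N.choose n) else 0)
    (X : Set (U → ℝ))
    (hX : X = {x | (∀ i, x i = 0 ∨ x i = 1) ∧
      (mt : ℝ) ≤ ∑ i, x i ∧ ∑ i, x i ≤ (Mt : ℝ)})
    (hmin : min mt (N - Mt) < n) :
    ∀ ε : ℝ, ∃ x ∈ X, ∃ x' ∈ X, Neighbor x x' ∧ ∃ z : ℝ,
      0 < Pr p (fun s => tHat p x s = z) ∧ Pr p (fun s => tHat p x' s = z) = 0 :=
  SRS_binary_pure_DP_fails_general N n mt Mt hN hnN hmM hMN p hdef X hX hmin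
end

section
/- Let U have size N, let 1 ≤ n ≤ N, let 0 ≤ m_t < M_t ≤ N, and let X = {x ∈ {0,1}^U : m_t ≤ Σ_i x_i ≤ M_t}. If n ≤ m_t and n ≤ N − M_t, then the smallest ε ≥ 0 such that the Horvitz–Thompson mechanism under simple random sampling of size n satisfies (ε, 0)-differential privacy on X is ε* = ln( max{ (N − M_t + 1)/(N − M_t + 1 − n), (m_t + 1)/(m_t + 1 − n) } ); that is, (ε,0)-differential privacy holds on X if and only if ε ≥ ε*. -/
/-!
Under simple random sampling every inclusion probability is `n / N`, so for a binary vector with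
`T` ones, supported on `S`, the Horvitz–Thompson estimate is `(N / n) · #(s ∩ S)`, and `#(s ∩ S)`
is hypergeometric with weights `C(T, k) C(N - T, n - k) / C(N, n)`.
Neighbouring vectors of `X` have `T` and `T + 1` ones. Passing from `T` to `T + 1` ones
multiplies the `k`-th weight by at most `(T + 1) / (T + 1 - k) ≤ (m_t + 1) / (m_t + 1 - n)`;
passing back is the same computation for the zeros, bounded by
`(N - M_t + 1) / (N - M_t + 1 - n)`. The bounds are attained at `k = n` between `m_t` and
`m_t + 1` ones, and at `k = 0` between `M_t - 1` and `M_t` ones.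
-/

attribute [local instance] Classical.propDecidable

noncomputable section

open Finset

theorem cast_choose_succ_eq_div_mul {t k : ℕ} (hk : k ≤ t) :
    ((t + 1).choose k : ℝ) = (t + 1) / (t + 1 - k) * t.choose k := by
  have h : ((t.choose k * (t + 1) : ℕ) : ℝ) = ((t + 1).choose k * (t + 1 - k) : ℕ) :=
    congrArg _ (Nat.choose_mul_succ_eq t k)
  have hk' : (k : ℝ) < t + 1 := by exact_mod_cast Nat.lt_succ_of_le hk
  push_cast [Nat.cast_sub (Nat.le_succ_of_le hk)] at h
  rw [div_mul_eq_mul_div, eq_div_iff (by linarith)]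
  linarith

theorem succ_div_succ_sub_le {k n m t : ℕ} (hkn : k ≤ n) (hnm : n ≤ m) (hmt : m ≤ t) :
    ((t : ℝ) + 1) / (t + 1 - k) ≤ (m + 1) / (m + 1 - n) := by
  have hkn' : (k : ℝ) ≤ n := by exact_mod_cast hkn
  have hnm' : (n : ℝ) ≤ m := by exact_mod_cast hnm
  have hmt' : (m : ℝ) ≤ t := by exact_mod_cast hmt
  rw [div_le_div_iff₀ (by linarith) (by linarith)]
  nlinarith [mul_le_mul hkn' (add_le_add_right hmt' 1) (by positivity) (Nat.cast_nonneg n)]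

theorem choose_succ_le_div_mul {k n m t : ℕ} (hkn : k ≤ n) (hnm : n ≤ m) (hmt : m ≤ t) :
    ((t + 1).choose k : ℝ) ≤ (m + 1) / (m + 1 - n) * t.choose k := by
  rw [cast_choose_succ_eq_div_mul (hkn.trans (hnm.trans hmt))]
  exact mul_le_mul_of_nonneg_right (succ_div_succ_sub_le hkn hnm hmt) (Nat.cast_nonneg _)

theorem succ_div_le_of_choose_succ_le {n t : ℕ} {E : ℝ} (hnt : n ≤ t)
    (h : ((t + 1).choose n : ℝ) ≤ E * t.choose n) : ((t : ℝ) + 1) / (t + 1 - n) ≤ E := by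
  rw [cast_choose_succ_eq_div_mul hnt] at h
  exact le_of_mul_le_mul_right h (by exact_mod_cast Nat.choose_pos hnt)

section Hypergeometric

variable {N n T m : ℕ}

def hypergeomPMF (N n T k : ℕ) : ℝ := (T.choose k * (N - T).choose (n - k) : ℝ) / N.choose n

def hypergeomProb (N n T : ℕ) (K : Set ℕ) : ℝ :=
  ∑ k ∈ range (n + 1) with k ∈ K, hypergeomPMF N n T k

theorem hypergeomPMF_nonneg (k : ℕ) : 0 ≤ hypergeomPMF N n T k := by
  unfold hypergeomPMF; positivity

theorem hypergeomProb_nonneg (K : Set ℕ) : 0 ≤ hypergeomProb N n T K :=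
  sum_nonneg fun k _ => hypergeomPMF_nonneg k

theorem hypergeomProb_singleton {k : ℕ} (hk : k ≤ n) :
    hypergeomProb N n T {k} = hypergeomPMF N n T k := by
  simp [hypergeomProb, filter_eq', Nat.lt_succ_iff.mpr hk]

theorem hypergeomProb_le_mul_of_pmf_le {T' : ℕ} {E : ℝ} (K : Set ℕ)
    (h : ∀ k ≤ n, hypergeomPMF N n T k ≤ E * hypergeomPMF N n T' k) :
    hypergeomProb N n T K ≤ E * hypergeomProb N n T' K := by
  rw [hypergeomProb, hypergeomProb, mul_sum]
  exact sum_le_sum fun k hk => h k (Nat.lt_succ_iff.mp (mem_range.mp (mem_filter.mp hk).1))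

theorem hypergeomPMF_succ_le {k : ℕ} (hkn : k ≤ n) (hnm : n ≤ m) (hmT : m ≤ T) :
    hypergeomPMF N n (T + 1) k ≤ (m + 1) / (m + 1 - n) * hypergeomPMF N n T k := by
  rw [hypergeomPMF, hypergeomPMF, mul_div_assoc', ← mul_assoc]
  have hchoose := choose_succ_le_div_mul hkn hnm hmT
  refine div_le_div_of_nonneg_right (mul_le_mul hchoose ?_ (by positivity)
    ((Nat.cast_nonneg _).trans hchoose)) (Nat.cast_nonneg _)
  exact_mod_cast Nat.choose_le_choose _ (Nat.sub_le_sub_left (Nat.le_succ T) N)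

theorem hypergeomPMF_le_succ (k : ℕ) (hnm : n ≤ m) (hmT : m ≤ N - (T + 1))
    (hTN : T < N) :
    hypergeomPMF N n T k ≤ (m + 1) / (m + 1 - n) * hypergeomPMF N n (T + 1) k := by
  have hN : N - T = N - (T + 1) + 1 := by omega
  rw [hypergeomPMF, hypergeomPMF, mul_div_assoc', mul_left_comm, hN]
  refine div_le_div_of_nonneg_right (mul_le_mul ?_
    (choose_succ_le_div_mul (Nat.sub_le n k) hnm hmT) (by positivity) (by positivity))
    (Nat.cast_nonneg _)
  exact_mod_cast Nat.choose_le_succ _ _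

theorem one_le_succ_div_succ_sub (hnm : n ≤ m) : (1 : ℝ) ≤ (m + 1) / (m + 1 - n) := by
  have : (n : ℝ) ≤ m := by exact_mod_cast hnm
  rw [one_le_div (by linarith)]
  linarith [(Nat.cast_nonneg n : (0 : ℝ) ≤ n)]

theorem hypergeomProb_le_mul_of_adjacent {mt Mt T' : ℕ} {E : ℝ} (K : Set ℕ)
    (hnm : n ≤ mt) (hnM : n ≤ N - Mt) (hMN : Mt ≤ N)
    (hT' : mt ≤ T' ∧ T' ≤ Mt) (hTT' : T ≤ T' + 1) (hT'T : T' ≤ T + 1)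
    (hdown : (((N - Mt : ℕ) : ℝ) + 1) / ((N - Mt : ℕ) + 1 - n) ≤ E)
    (hup : ((mt : ℝ) + 1) / (mt + 1 - n) ≤ E) :
    hypergeomProb N n T K ≤ E * hypergeomProb N n T' K := by
  obtain rfl | rfl | rfl : T' = T + 1 ∨ T = T' + 1 ∨ T' = T := by omega
  · refine hypergeomProb_le_mul_of_pmf_le K fun k _ => ?_
    exact (hypergeomPMF_le_succ k hnM (by omega) (by omega)).trans
      (mul_le_mul_of_nonneg_right hdown (hypergeomPMF_nonneg k))
  · refine hypergeomProb_le_mul_of_pmf_le K fun k hk => ?_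
    exact (hypergeomPMF_succ_le hk hnm hT'.1).trans
      (mul_le_mul_of_nonneg_right hup (hypergeomPMF_nonneg k))
  · exact le_mul_of_one_le_left (hypergeomProb_nonneg K) ((one_le_succ_div_succ_sub hnm).trans hup)

theorem succ_div_le_of_hypergeomProb_top_le {E : ℝ} (hnm : n ≤ m) (hmN : m < N)
    (h : hypergeomProb N n (m + 1) {n} ≤ E * hypergeomProb N n m {n}) :
    ((m : ℝ) + 1) / (m + 1 - n) ≤ E := by
  simp only [hypergeomProb_singleton le_rfl, hypergeomPMF, Nat.sub_self, Nat.choose_zero_right,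
    Nat.cast_one, mul_one, mul_div_assoc'] at h
  rw [div_le_div_iff_of_pos_right (by exact_mod_cast Nat.choose_pos (by omega))] at h
  exact succ_div_le_of_choose_succ_le hnm h

theorem succ_div_le_of_hypergeomProb_bot_le {E : ℝ} (hnm : n ≤ m) (hTm : T + 1 + m = N)
    (h : hypergeomProb N n T {0} ≤ E * hypergeomProb N n (T + 1) {0}) :
    ((m : ℝ) + 1) / (m + 1 - n) ≤ E := by
  simp only [hypergeomProb_singleton (Nat.zero_le n), hypergeomPMF, Nat.sub_zero,
    Nat.choose_zero_right, Nat.cast_one, one_mul, mul_div_assoc',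
    show N - T = m + 1 by omega, show N - (T + 1) = m by omega] at h
  rw [div_le_div_iff_of_pos_right (by exact_mod_cast Nat.choose_pos (by omega))] at h
  exact succ_div_le_of_choose_succ_le hnm h

end Hypergeometric

theorem setOf_binary_sum_mem_Icc_eq_image {U : Type*} [Fintype U] (a b : ℕ) :
    {x : U → ℝ | (∀ i, x i = 0 ∨ x i = 1) ∧ (a : ℝ) ≤ ∑ i, x i ∧ ∑ i, x i ≤ (b : ℝ)} =
      (fun S : Finset U => fun i => if i ∈ S then (1 : ℝ) else 0) '' {S | a ≤ #S ∧ #S ≤ b} := by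
  ext x
  constructor
  · rintro ⟨hx, hxa, hxb⟩
    have hS : x = fun i => if i ∈ ({i | x i = 1} : Finset U) then (1 : ℝ) else 0 := by
      funext i
      rcases hx i with h | h <;> simp [h]
    rw [hS] at hxa hxb
    simp only [sum_boole, filter_mem_eq_inter, univ_inter] at hxa hxb
    exact ⟨_, ⟨by exact_mod_cast hxa, by exact_mod_cast hxb⟩, hS.symm⟩
  · rintro ⟨S, ⟨hSa, hSb⟩, rfl⟩
    refine ⟨fun i => by by_cases h : i ∈ S <;> simp [h], ?_⟩
    simp only [sum_boole, filter_mem_eq_inter, univ_inter]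
    exact ⟨by exact_mod_cast hSa, by exact_mod_cast hSb⟩

theorem card_le_card_add_one_of_neighbor {U : Type*} {S S' : Finset U}
    (h : Neighbor (fun i => if i ∈ S then (1 : ℝ) else 0)
      (fun i => if i ∈ S' then (1 : ℝ) else 0)) :
    #S ≤ #S' + 1 := by
  have hdiff : #(S \ S') ≤ 1 := card_le_one.mpr fun a ha b hb => by
    rw [mem_sdiff] at ha hb
    exact h (by simp [ha.1, ha.2]) (by simp [hb.1, hb.2])
  have := card_le_card_sdiff_add_card (s := S) (t := S')
  omega

theorem exists_neighbor_indicator_card_eq_succ {U : Type*} [Fintype U] {T : ℕ}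
    (hT : T < Fintype.card U) :
    ∃ S S' : Finset U, #S = T ∧ #S' = T + 1 ∧
      Neighbor (fun i => if i ∈ S then (1 : ℝ) else 0)
        (fun i => if i ∈ S' then (1 : ℝ) else 0) := by
  obtain ⟨S, -, hS⟩ := exists_subset_card_eq (s := (univ : Finset U)) (n := T)
    (by rw [card_univ]; omega)
  obtain ⟨j, -, hj⟩ := exists_mem_notMem_of_card_lt_card (s := S) (t := univ)
    (by rw [card_univ]; omega)
  refine ⟨S, insert j S, hS, by rw [card_insert_of_notMem hj, hS], ?_⟩
  refine (Set.subsingleton_singleton (a := j)).anti fun i hi => ?_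
  by_contra hij
  exact hi (by simp [mem_insert, Set.mem_singleton_iff.not.mp hij])

section SimpleRandomSampling

variable {U : Type*} [Fintype U] {N n : ℕ} {p : Finset U → ℝ}

theorem card_filter_card_inter_eq (S : Finset U) {k : ℕ} (hk : k ≤ n) :
    #{s : Finset U | #s = n ∧ #(s ∩ S) = k} = (#S).choose k * (#Sᶜ).choose (n - k) := by
  rw [← card_powersetCard, ← card_powersetCard, ← card_product]
  refine card_bij' (fun s _ => (s ∩ S, s ∩ Sᶜ)) (fun q _ => q.1 ∪ q.2) ?_ ?_ ?_ ?_
  · intro s hs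
    obtain ⟨rfl, rfl⟩ : #s = n ∧ #(s ∩ S) = k := by simpa using hs
    have := card_inter_add_card_sdiff s S
    rw [sdiff_eq_inter_compl] at this
    simp only [mem_product, mem_powersetCard, inter_subset_right, true_and]
    omega
  · rintro ⟨a, b⟩ h
    simp only [mem_product, mem_powersetCard] at h
    obtain ⟨⟨haS, rfl⟩, hbS, hb⟩ := h
    have hab : Disjoint a b :=
      disjoint_of_subset_left haS (disjoint_of_subset_right hbS disjoint_compl_right)
    have : (a ∪ b) ∩ S = a := by grind [mem_compl]
    simp only [mem_filter, mem_univ, card_union_of_disjoint hab, this, hb, and_true, true_and]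
    omega
  · intro s _
    simp [← inter_union_distrib_left]
  · rintro ⟨a, b⟩ h
    simp only [mem_product, mem_powersetCard] at h
    ext x <;> grind [mem_compl]

theorem card_filter_card_inter_mem (S : Finset U) (K : Set ℕ) :
    #{s : Finset U | #s = n ∧ #(s ∩ S) ∈ K} =
      ∑ k ∈ range (n + 1) with k ∈ K, (#S).choose k * (#Sᶜ).choose (n - k) := by
  rw [card_eq_sum_card_fiberwise (f := fun s => #(s ∩ S)) (t := {k ∈ range (n + 1) | k ∈ K})]
  · refine sum_congr rfl fun k hk => ?_
    rw [mem_filter, mem_range, Nat.lt_succ_iff] at hk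
    rw [filter_filter, ← card_filter_card_inter_eq S hk.1]
    congr 1
    refine filter_congr fun s _ => ?_
    constructor
    · rintro ⟨⟨hs, -⟩, hsk⟩; exact ⟨hs, hsk⟩
    · rintro ⟨hs, hsk⟩; exact ⟨⟨hs, hsk ▸ hk.2⟩, hsk⟩
  · intro s hs
    simp only [coe_filter, mem_univ, true_and] at hs
    simp only [coe_filter, mem_range, Set.mem_ofPred_eq, Nat.lt_succ_iff]
    exact ⟨hs.1 ▸ card_le_card inter_subset_left, hs.2⟩

variable (hdef : ∀ s : Finset U, p s = if s.card = n then (1 : ℝ) / (N.choose n) else 0)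
include hdef

theorem Pr_eq_card_div (E : Finset U → Prop) :
    Pr p E = #{s : Finset U | #s = n ∧ E s} / N.choose n := by
  simp only [Pr, hdef, sum_ite, sum_const_zero, add_zero, sum_const, filter_filter, nsmul_eq_mul]
  rw [mul_one_div]
  simp_rw [and_comm]

theorem Pr_card_inter_mem (hN : Fintype.card U = N) (S : Finset U) (K : Set ℕ) :
    Pr p (fun s => #(s ∩ S) ∈ K) = hypergeomProb N n #S K := by
  rw [Pr_eq_card_div hdef, card_filter_card_inter_mem, hypergeomProb, Nat.cast_sum, sum_div,
    card_compl, hN]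
  push_cast
  rfl

theorem incl_eq_s15 (hN : Fintype.card U = N) (hn : 1 ≤ n) (hnN : n ≤ N) (i : U) :
    incl p i = n / N := by
  have hmem : (fun s : Finset U => i ∈ s) = fun s => #(s ∩ {i}) ∈ ({1} : Set ℕ) := by
    funext s
    by_cases h : i ∈ s <;> simp [h]
  have hchoose : (N * (N - 1).choose (n - 1) : ℝ) = N.choose n * n := by
    have := Nat.add_one_mul_choose_eq (N - 1) (n - 1)
    rw [Nat.sub_add_cancel (hn.trans hnN), Nat.sub_add_cancel hn] at this
    exact_mod_cast this
  have hN0 : (N : ℝ) ≠ 0 := by exact_mod_cast (Nat.lt_of_lt_of_le hn hnN).ne'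
  have hC0 : (N.choose n : ℝ) ≠ 0 := by exact_mod_cast (Nat.choose_pos hnN).ne'
  have hincl : incl p i = Pr p (fun s => i ∈ s) := by
    unfold incl Pr
    congr
  rw [hincl, hmem, Pr_card_inter_mem hdef hN, card_singleton, hypergeomProb_singleton hn,
    hypergeomPMF, Nat.choose_self, Nat.cast_one, one_mul, div_eq_div_iff hC0 hN0]
  linear_combination hchoose

theorem tHat_indicator (hN : Fintype.card U = N) (hn : 1 ≤ n) (hnN : n ≤ N) (S s : Finset U) :
    tHat p (fun i => if i ∈ S then (1 : ℝ) else 0) s = N / n * #(s ∩ S) := by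
  simp only [tHat, incl_eq_s15 hdef hN hn hnN, ite_div, one_div_div, zero_div, sum_ite_mem,
    sum_const, nsmul_eq_mul, mul_comm]

theorem Pr_tHat_indicator (hN : Fintype.card U = N) (hn : 1 ≤ n) (hnN : n ≤ N) (S : Finset U)
    (A : Set ℝ) :
    Pr p (fun s => tHat p (fun i => if i ∈ S then (1 : ℝ) else 0) s ∈ A) =
      hypergeomProb N n #S ((fun k : ℕ => (N / n : ℝ) * k) ⁻¹' A) := by
  simp_rw [tHat_indicator hdef hN hn hnN]
  exact Pr_card_inter_mem hdef hN S ((fun k : ℕ => (N / n : ℝ) * k) ⁻¹' A)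

end SimpleRandomSampling

/-- If `n ≤ m_t` and `n ≤ N − M_t`, then under simple random sampling of size `n`
the Horvitz–Thompson mechanism on binary data with total constrained to
`[m_t, M_t]` satisfies `(ε,0)`-differential privacy if and only if
`ε ≥ ln(max{(N−M_t+1)/(N−M_t+1−n), (m_t+1)/(m_t+1−n)})`; that is, this value is
the smallest admissible `ε ≥ 0`. -/
theorem SRS_binary_pure_DP_threshold {U : Type*} [Fintype U]
    (N n mt Mt : ℕ) (hN : Fintype.card U = N) (hn1 : 1 ≤ n) (hnN : n ≤ N)
    (hmM : mt < Mt) (hMN : Mt ≤ N)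
    (p : Finset U → ℝ)
    (hdef : ∀ s : Finset U, p s = if s.card = n then (1 : ℝ) / (N.choose n) else 0)
    (X : Set (U → ℝ))
    (hX : X = {x | (∀ i, x i = 0 ∨ x i = 1) ∧
      (mt : ℝ) ≤ ∑ i, x i ∧ ∑ i, x i ≤ (Mt : ℝ)})
    (hnm : n ≤ mt) (hnM : n ≤ N - Mt) :
    ∀ ε : ℝ,
      ((∀ x ∈ X, ∀ x' ∈ X, Neighbor x x' → ∀ A : Set ℝ,
          Pr p (fun s => tHat p x s ∈ A) ≤
            Real.exp ε * Pr p (fun s => tHat p x' s ∈ A)) ↔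
        Real.log (max (((N : ℝ) - Mt + 1) / ((N : ℝ) - Mt + 1 - n))
          (((mt : ℝ) + 1) / ((mt : ℝ) + 1 - n))) ≤ ε) := by
  intro ε
  have hdown_pos : (0 : ℝ) < ((N - Mt : ℕ) + 1) / ((N - Mt : ℕ) + 1 - n) := by
    have : (n : ℝ) ≤ (N - Mt : ℕ) := by exact_mod_cast hnM
    exact div_pos (by positivity) (by linarith)
  rw [hX, setOf_binary_sum_mem_Icc_eq_image, ← Nat.cast_sub hMN,
    Real.log_le_iff_le_exp (lt_max_of_lt_left hdown_pos), max_le_iff]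
  simp only [Set.forall_mem_image, Pr_tHat_indicator hdef hN hn1 hnN]
  set f : ℕ → ℝ := fun k => (N / n : ℝ) * k
  have hf : f.Injective := fun a b h => by
    have hN0 : 0 < N := Nat.lt_of_lt_of_le hn1 hnN
    exact_mod_cast mul_left_cancel₀ (show (N / n : ℝ) ≠ 0 by positivity) h
  constructor
  · intro hDP
    obtain ⟨S, S', hS, hS', hSS'⟩ :=
      exists_neighbor_indicator_card_eq_succ (show Mt - 1 < Fintype.card U by omega)
    obtain ⟨S₀, S₀', hS₀, hS₀', hSS₀⟩ :=
      exists_neighbor_indicator_card_eq_succ (show mt < Fintype.card U by omega)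
    have hbot := @hDP S ⟨by omega, by omega⟩ S' ⟨by omega, by omega⟩ hSS' (f '' {0})
    have htop := @hDP S₀' ⟨by omega, by omega⟩ S₀ ⟨by omega, by omega⟩ hSS₀.symm (f '' {n})
    rw [Set.preimage_image_eq _ hf, hS, hS'] at hbot
    rw [Set.preimage_image_eq _ hf, hS₀, hS₀'] at htop
    exact ⟨succ_div_le_of_hypergeomProb_bot_le hnM (by omega) hbot,
      succ_div_le_of_hypergeomProb_top_le hnm (by omega) htop⟩
  · rintro ⟨hdown, hup⟩ S - S' hS' hSS' A
    exact hypergeomProb_le_mul_of_adjacent _ hnm hnM hMN hS'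
      (card_le_card_add_one_of_neighbor hSS') (card_le_card_add_one_of_neighbor hSS'.symm)
      hdown hup
end
end

section
/- Let i ∈ U with 0 < p_i. Then for every data vector x, the conditional variance of the Horvitz–Thompson estimator given that i is selected satisfies (1/p_i)·Σ_{s ∋ i} p(s)·t̂(x,s)² − ((1/p_i)·Σ_{s ∋ i} p(s)·t̂(x,s))² = Σ_{j,ℓ ∈ U∖{i}} (x_j x_ℓ/(p_j p_ℓ))·(p_{jℓ|i} − p_{j|i}·p_{ℓ|i}), where p_{j|i} = p_{ij}/p_i and p_{jℓ|i} = p_{ijℓ}/p_i. In particular this quantity does not depend on x_i. -/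
attribute [local instance] Classical.propDecidable

noncomputable section

/-- Second-order inclusion probability `p_{ij} = ∑_{s ⊇ {i,j}} p(s)`. -/
def incl2 {U : Type*} [Fintype U] (p : Finset U → ℝ) (i j : U) : ℝ :=
  ∑ s ∈ Finset.univ.filter (fun s : Finset U => i ∈ s ∧ j ∈ s), p s

/-- Third-order inclusion probability `p_{ijℓ} = ∑_{s ⊇ {i,j,ℓ}} p(s)`. -/
def incl3 {U : Type*} [Fintype U] (p : Finset U → ℝ) (i j l : U) : ℝ :=
  ∑ s ∈ Finset.univ.filter (fun s : Finset U => i ∈ s ∧ j ∈ s ∧ l ∈ s), p s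

/-- Conditional variance of the Horvitz–Thompson estimator given that unit `i` is
selected:
`E[t̂² | i∈S] − E[t̂ | i∈S]² = ∑_{j,ℓ≠i} (x_j x_ℓ/(p_j p_ℓ))(p_{jℓ|i} − p_{j|i} p_{ℓ|i})`,
with `p_{j|i} = p_{ij}/p_i` and `p_{jℓ|i} = p_{ijℓ}/p_i`; in particular this
quantity does not depend on `x_i`. -/
theorem HT_cond_var_given_selected {U : Type*} [Fintype U]
    (p : Finset U → ℝ) (hp : ∀ s, 0 ≤ p s) (hsum : ∑ s : Finset U, p s = 1)
    (hpos : ∀ j : U, 0 < incl p j) (i : U) :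
    (∀ x : U → ℝ,
      (incl p i)⁻¹ * (∑ s ∈ Finset.univ.filter (fun s : Finset U => i ∈ s),
          p s * tHat p x s ^ 2) -
        ((incl p i)⁻¹ * ∑ s ∈ Finset.univ.filter (fun s : Finset U => i ∈ s),
          p s * tHat p x s) ^ 2 =
      ∑ j ∈ Finset.univ.erase i, ∑ l ∈ Finset.univ.erase i,
        (x j * x l / (incl p j * incl p l)) *
          (incl3 p i j l / incl p i - (incl2 p i j / incl p i) * (incl2 p i l / incl p i))) ∧
    (∀ x x' : U → ℝ, (∀ j ≠ i, x j = x' j) →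
      ∑ j ∈ Finset.univ.erase i, ∑ l ∈ Finset.univ.erase i,
        (x j * x l / (incl p j * incl p l)) *
          (incl3 p i j l / incl p i - (incl2 p i j / incl p i) * (incl2 p i l / incl p i)) =
      ∑ j ∈ Finset.univ.erase i, ∑ l ∈ Finset.univ.erase i,
        (x' j * x' l / (incl p j * incl p l)) *
          (incl3 p i j l / incl p i - (incl2 p i j / incl p i) * (incl2 p i l / incl p i))) := by
  classical
  constructor
  · intro x
    set c : U → ℝ := fun j => x j / incl p j with hc
    have hPne : incl p i ≠ 0 := (hpos i).ne'
    -- first moment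
    have h1 : (∑ s ∈ Finset.univ.filter (fun s : Finset U => i ∈ s), p s * tHat p x s)
        = ∑ j : U, c j * incl2 p i j := by
      calc ∑ s ∈ Finset.univ.filter (fun s : Finset U => i ∈ s), p s * tHat p x s
          = ∑ s ∈ Finset.univ.filter (fun s : Finset U => i ∈ s),
              ∑ j : U, if j ∈ s then p s * c j else 0 := by
            refine Finset.sum_congr rfl fun s _ => ?_
            rw [tHat, Finset.mul_sum, Finset.sum_ite_mem, Finset.univ_inter]
        _ = ∑ j : U, ∑ s ∈ Finset.univ.filter (fun s : Finset U => i ∈ s),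
              if j ∈ s then p s * c j else 0 := Finset.sum_comm
        _ = ∑ j : U, c j * incl2 p i j := by
            refine Finset.sum_congr rfl fun j _ => ?_
            rw [Finset.sum_ite, Finset.sum_const_zero, add_zero, Finset.filter_filter,
              incl2, ← Finset.sum_mul, mul_comm]
    -- second moment
    have h2 : (∑ s ∈ Finset.univ.filter (fun s : Finset U => i ∈ s), p s * tHat p x s ^ 2)
        = ∑ j : U, ∑ l : U, (c j * c l) * incl3 p i j l := by
      have expand : ∀ s : Finset U, p s * tHat p x s ^ 2
          = ∑ j : U, ∑ l : U, if j ∈ s ∧ l ∈ s then p s * (c j * c l) else 0 := by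
        intro s
        have ht : tHat p x s = ∑ j : U, if j ∈ s then c j else 0 := by
          rw [tHat, Finset.sum_ite_mem, Finset.univ_inter]
        rw [ht, sq, Finset.sum_mul_sum, Finset.mul_sum]
        refine Finset.sum_congr rfl fun j _ => ?_
        rw [Finset.mul_sum]
        refine Finset.sum_congr rfl fun l _ => ?_
        by_cases hj : j ∈ s <;> by_cases hl : l ∈ s <;> simp [hj, hl, mul_assoc]
      calc ∑ s ∈ Finset.univ.filter (fun s : Finset U => i ∈ s), p s * tHat p x s ^ 2
          = ∑ s ∈ Finset.univ.filter (fun s : Finset U => i ∈ s),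
              ∑ j : U, ∑ l : U, if j ∈ s ∧ l ∈ s then p s * (c j * c l) else 0 := by
            exact Finset.sum_congr rfl fun s _ => expand s
        _ = ∑ j : U, ∑ s ∈ Finset.univ.filter (fun s : Finset U => i ∈ s),
              ∑ l : U, if j ∈ s ∧ l ∈ s then p s * (c j * c l) else 0 := Finset.sum_comm
        _ = ∑ j : U, ∑ l : U, ∑ s ∈ Finset.univ.filter (fun s : Finset U => i ∈ s),
              if j ∈ s ∧ l ∈ s then p s * (c j * c l) else 0 := by
            exact Finset.sum_congr rfl fun j _ => Finset.sum_comm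
        _ = ∑ j : U, ∑ l : U, (c j * c l) * incl3 p i j l := by
            refine Finset.sum_congr rfl fun j _ => Finset.sum_congr rfl fun l _ => ?_
            rw [Finset.sum_ite, Finset.sum_const_zero, add_zero, Finset.filter_filter,
              incl3, ← Finset.sum_mul, mul_comm]
    rw [h1, h2]
    -- express LHS as full double sum
    have hfull : (incl p i)⁻¹ * (∑ j : U, ∑ l : U, (c j * c l) * incl3 p i j l) -
        ((incl p i)⁻¹ * ∑ j : U, c j * incl2 p i j) ^ 2
        = ∑ j : U, ∑ l : U, (c j * c l) *
            (incl3 p i j l / incl p i - (incl2 p i j / incl p i) * (incl2 p i l / incl p i)) := by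
      rw [sq, mul_mul_mul_comm, Finset.sum_mul_sum, Finset.mul_sum, Finset.mul_sum,
        ← Finset.sum_sub_distrib]
      refine Finset.sum_congr rfl fun j _ => ?_
      rw [Finset.mul_sum, Finset.mul_sum, ← Finset.sum_sub_distrib]
      refine Finset.sum_congr rfl fun l _ => ?_
      field_simp
    rw [hfull]
    -- kill the i-row and i-column
    have hA_i : incl2 p i i = incl p i := by
      rw [incl2, incl]; congr 1; ext s; simp
    have hB_il : ∀ l, incl3 p i i l = incl2 p i l := fun l => by
      rw [incl3, incl2]; congr 1; ext s; simp only [Finset.mem_filter]; tauto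
    have hB_ji : ∀ j, incl3 p i j i = incl2 p i j := fun j => by
      rw [incl3, incl2]; congr 1; ext s; simp only [Finset.mem_filter]; tauto
    set g : U → U → ℝ := fun j l => (c j * c l) *
        (incl3 p i j l / incl p i - (incl2 p i j / incl p i) * (incl2 p i l / incl p i)) with hg
    have hrow : ∀ l, g i l = 0 := fun l => by
      simp [hg, hB_il, hA_i, div_self hPne]
    have hcol : ∀ j, g j i = 0 := fun j => by
      simp [hg, hB_ji, hA_i, div_self hPne]
    have huniv : (Finset.univ : Finset U) = insert i (Finset.univ.erase i) :=
      (Finset.insert_erase (Finset.mem_univ i)).symm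
    calc (∑ j : U, ∑ l : U, g j l)
        = ∑ j ∈ insert i (Finset.univ.erase i), ∑ l ∈ insert i (Finset.univ.erase i), g j l := by
          rw [← huniv]
      _ = ∑ j ∈ Finset.univ.erase i, ∑ l ∈ Finset.univ.erase i, g j l := by
          rw [Finset.sum_insert (Finset.notMem_erase i _)]
          rw [Finset.sum_insert (Finset.notMem_erase i _), hrow i,
            Finset.sum_eq_zero (fun l _ => hrow l), add_zero, zero_add]
          refine Finset.sum_congr rfl fun j _ => ?_
          rw [Finset.sum_insert (Finset.notMem_erase i _), hcol j, zero_add]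
      _ = ∑ j ∈ Finset.univ.erase i, ∑ l ∈ Finset.univ.erase i,
            (x j * x l / (incl p j * incl p l)) *
              (incl3 p i j l / incl p i - (incl2 p i j / incl p i) * (incl2 p i l / incl p i)) := by
          refine Finset.sum_congr rfl fun j _ => Finset.sum_congr rfl fun l _ => ?_
          simp only [hg, hc]
          ring
  · intro x x' h
    refine Finset.sum_congr rfl fun j hj => Finset.sum_congr rfl fun l hl => ?_
    rw [h j (Finset.ne_of_mem_erase hj), h l (Finset.ne_of_mem_erase hl)]
end
end
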